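/- arXiv:1702.03538 — 6 statements merged into one kernel-verified Lean document; each statement's English description precedes it below -/
import Mathlib

section
/- Let θ, λ, R be real numbers and let V₁, V₂, P₁, P₂ be complex numbers with V₁·P₂ − V₂·P₁ = 1. Then the 2×2 complex matrix with rows (V₁ − e^{iθ}, V₂) and (P₁ − e^{iθ}·λ·R, P₂ − e^{iθ}) has zero determinant if and only if 2·cos θ = V₁ + P₂ − λ·V₂·R. -/
/-!
Expanding the determinant and using the Wronskian `V₁P₂ − V₂P₁ = 1` gives
`e² − (V₁ + P₂ − λV₂R) e + 1` with `e = e^{iθ}`. As `e ≠ 0`, this vanishes iff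
`e + e⁻¹ = V₁ + P₂ − λV₂R`, and `e + e⁻¹ = 2 cos θ`.
-/

open Complex

theorem mul_self_sub_mul_add_one_eq_zero_iff {K : Type*} [Field K] {e : K} (he : e ≠ 0)
    (t : K) : e * e - t * e + 1 = 0 ↔ e + e⁻¹ = t := by
  constructor
  · intro h
    field_simp
    linear_combination h
  · intro h
    rw [← h]
    field_simp
    ring

theorem Complex.two_cos_ofReal_eq_exp_add_inv (θ : ℝ) :
    2 * (Real.cos θ : ℂ) = exp (θ * I) + (exp (θ * I))⁻¹ := by
  rw [ofReal_cos, two_cos, neg_mul, exp_neg]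

/-- The coefficient matrix of the quasi-periodicity/jump system has zero
determinant iff `2 cos θ = V₁ + P₂ − λ V₂ R`, given the Wronskian normalisation
`V₁P₂ − V₂P₁ = 1`. -/
theorem det_zero_iff_trace_condition
    (θ lam R : ℝ) (V₁ V₂ P₁ P₂ : ℂ)
    (hW : V₁ * P₂ - V₂ * P₁ = 1) :
    (Matrix.det !![V₁ - Complex.exp (θ * Complex.I), V₂;
        P₁ - Complex.exp (θ * Complex.I) * (lam : ℂ) * (R : ℂ),
        P₂ - Complex.exp (θ * Complex.I)] = 0)
      ↔ (2 * (Real.cos θ : ℂ) = V₁ + P₂ - (lam : ℂ) * V₂ * (R : ℂ)) := by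
  set e := exp (θ * I)
  have hdet : Matrix.det !![V₁ - e, V₂; P₁ - e * lam * R, P₂ - e] =
      e * e - (V₁ + P₂ - lam * V₂ * R) * e + 1 := by
    rw [Matrix.det_fin_two_of, ← hW]
    ring
  rw [hdet, mul_self_sub_mul_add_one_eq_zero_iff (exp_ne_zero _),
    two_cos_ofReal_eq_exp_add_inv, eq_comm]
end

section
/- For every λ ∈ ℝ the following are equivalent: (i) there exist θ ∈ [0,2π) and a nontrivial complex solution (u,p) of the soft-inclusion equation with spectral parameter λ (i.e. u′(y) = p(y)/a₀(y) and p′(y) = −λ·ρ₀(y)·u(y) for all y ∈ [0,h], with (u,p) not identically zero on [0,h]) satisfying the quasi-periodicity condition u(h) = e^{iθ}·u(0) and the jump condition e^{−iθ}·p(h) − p(0) = λ·u(0)·∫_h^1 ρ₁; (ii) |F(λ)| ≤ 2. -/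
/-!
Wronskians of solutions of `u' = p / a₀`, `p' = -λ ρ₀ u` are constant, so every solution on
`[0, h]` is `u(0) (v₁, p₁) + p(0) (v₂, p₂)`. The quasi-periodicity and jump conditions then say
that `e^{iθ}` is an eigenvalue of the real transfer matrix
`T = [[v₁(h), v₂(h)], [p₁(h) - λ m v₁(h), p₂(h) - λ m v₂(h)]]`, where `m = ∫_h^1 ρ₁`.
Its determinant is the Wronskian `1` and its trace is `F(λ)`, so at `μ = e^{iθ}` its
characteristic polynomial is `μ² - F(λ) μ + 1 = e^{iθ} (2 cos θ - F(λ))`, which vanishes for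
some `θ` iff `|F(λ)| ≤ 2`.
-/

open Set Real

theorem exists_ne_zero_eigenvector_iff (a b c d μ : ℂ) :
    (∃ x y : ℂ, (x ≠ 0 ∨ y ≠ 0) ∧ a * x + b * y = μ * x ∧ c * x + d * y = μ * y) ↔
      (a - μ) * (d - μ) - b * c = 0 := by
  rw [← Matrix.det_fin_two_of, ← Matrix.exists_mulVec_eq_zero_iff]
  simp [Fin.exists_fin_succ_pi, Fin.exists_fin_zero_pi, funext_iff, Fin.forall_fin_two, sub_mul,
    sub_add_eq_add_sub, add_sub, sub_eq_zero, or_iff_not_imp_left]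

theorem exp_mul_I_sq_sub_mul_add_one (θ : ℝ) (t : ℂ) :
    Complex.exp (θ * Complex.I) ^ 2 - t * Complex.exp (θ * Complex.I) + 1 =
      Complex.exp (θ * Complex.I) * (2 * Real.cos θ - t) := by
  have hinv : Complex.exp (-θ * Complex.I) * Complex.exp (θ * Complex.I) = 1 := by
    rw [← Complex.exp_add]; simp
  rw [Complex.ofReal_cos, Complex.cos]
  linear_combination -hinv

theorem exists_two_mul_cos_eq_iff (t : ℝ) :
    (∃ θ ∈ Ico 0 (2 * π), 2 * Real.cos θ = t) ↔ |t| ≤ 2 := by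
  constructor
  · rintro ⟨θ, -, rfl⟩
    rw [abs_mul, abs_two]
    linarith [abs_cos_le_one θ]
  · intro ht
    rw [abs_le] at ht
    refine ⟨arccos (t / 2), ⟨arccos_nonneg _, (arccos_le_pi _).trans_lt (by linarith [pi_pos])⟩, ?_⟩
    rw [cos_arccos (by linarith) (by linarith)]
    ring

namespace SoftInclusion

def IsSolution (a ρ : ℝ → ℝ) (lam : ℝ) (s : Set ℝ) (u p : ℝ → ℂ) : Prop :=
  (∀ y ∈ s, HasDerivAt u (p y / (a y : ℂ)) y) ∧
    ∀ y ∈ s, HasDerivAt p (-((lam : ℂ) * (ρ y : ℂ) * u y)) y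

variable {a ρ : ℝ → ℝ} {lam : ℝ} {s : Set ℝ}

theorem IsSolution.ofReal {v q : ℝ → ℝ} (hv : ∀ y ∈ s, HasDerivAt v (q y / a y) y)
    (hq : ∀ y ∈ s, HasDerivAt q (-(lam * ρ y * v y)) y) :
    IsSolution a ρ lam s (fun y => (v y : ℂ)) (fun y => (q y : ℂ)) :=
  ⟨fun y hy => by simpa using (hv y hy).ofReal_comp,
    fun y hy => by simpa using (hq y hy).ofReal_comp⟩

theorem IsSolution.linearCombination {u₁ p₁ u₂ p₂ : ℝ → ℂ}
    (h₁ : IsSolution a ρ lam s u₁ p₁) (h₂ : IsSolution a ρ lam s u₂ p₂) (c d : ℂ) :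
    IsSolution a ρ lam s (fun y => c * u₁ y + d * u₂ y) (fun y => c * p₁ y + d * p₂ y) := by
  refine ⟨fun y hy => ?_, fun y hy => ?_⟩
  · exact (((h₁.1 y hy).const_mul c).add ((h₂.1 y hy).const_mul d)).congr_deriv (by ring)
  · exact (((h₁.2 y hy).const_mul c).add ((h₂.2 y hy).const_mul d)).congr_deriv (by ring)

theorem IsSolution.wronskian_eq {x₀ x₁ : ℝ} {u₁ p₁ u₂ p₂ : ℝ → ℂ}
    (h₁ : IsSolution a ρ lam (Icc x₀ x₁) u₁ p₁) (h₂ : IsSolution a ρ lam (Icc x₀ x₁) u₂ p₂)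
    {y : ℝ} (hy : y ∈ Icc x₀ x₁) :
    u₁ y * p₂ y - u₂ y * p₁ y = u₁ x₀ * p₂ x₀ - u₂ x₀ * p₁ x₀ := by
  have hW : ∀ z ∈ Icc x₀ x₁, HasDerivAt (fun t => u₁ t * p₂ t - u₂ t * p₁ t) 0 z := by
    intro z hz
    exact (((h₁.1 z hz).mul (h₂.2 z hz)).sub ((h₂.1 z hz).mul (h₁.2 z hz))).congr_deriv (by ring)
  refine constant_of_has_deriv_right_zero (fun z hz => (hW z hz).continuousAt.continuousWithinAt)
    (fun z hz => (hW z (Ico_subset_Icc_self hz)).hasDerivWithinAt) y hy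

theorem IsSolution.eq_fundamental_combination {x₀ x₁ : ℝ} {u p V₁ P₁ V₂ P₂ : ℝ → ℂ}
    (hu : IsSolution a ρ lam (Icc x₀ x₁) u p)
    (h₁ : IsSolution a ρ lam (Icc x₀ x₁) V₁ P₁) (h₂ : IsSolution a ρ lam (Icc x₀ x₁) V₂ P₂)
    (hV₁ : V₁ x₀ = 1) (hP₁ : P₁ x₀ = 0) (hV₂ : V₂ x₀ = 0) (hP₂ : P₂ x₀ = 1)
    {y : ℝ} (hy : y ∈ Icc x₀ x₁) :
    u y = u x₀ * V₁ y + p x₀ * V₂ y ∧ p y = u x₀ * P₁ y + p x₀ * P₂ y := by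
  have hW := h₁.wronskian_eq h₂ hy
  have hW₁ := h₁.wronskian_eq hu hy
  have hW₂ := hu.wronskian_eq h₂ hy
  simp only [hV₁, hP₁, hV₂, hP₂] at hW hW₁ hW₂
  constructor
  · linear_combination V₁ y * hW₂ + V₂ y * hW₁ - u y * hW
  · linear_combination P₁ y * hW₂ + P₂ y * hW₁ - p y * hW

theorem exists_quasiperiodic_solution_iff {h m : ℝ} (hh : 0 ≤ h) {V₁ P₁ V₂ P₂ : ℝ → ℂ}
    (h₁ : IsSolution a ρ lam (Icc 0 h) V₁ P₁) (h₂ : IsSolution a ρ lam (Icc 0 h) V₂ P₂)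
    (hV₁ : V₁ 0 = 1) (hP₁ : P₁ 0 = 0) (hV₂ : V₂ 0 = 0) (hP₂ : P₂ 0 = 1) {μ : ℂ} (hμ : μ ≠ 0) :
    (∃ u p : ℝ → ℂ, IsSolution a ρ lam (Icc 0 h) u p ∧ (∃ y ∈ Icc 0 h, u y ≠ 0 ∨ p y ≠ 0) ∧
        u h = μ * u 0 ∧ μ⁻¹ * p h - p 0 = lam * u 0 * m) ↔
      ∃ x y : ℂ, (x ≠ 0 ∨ y ≠ 0) ∧ V₁ h * x + V₂ h * y = μ * x ∧
        (P₁ h - lam * m * V₁ h) * x + (P₂ h - lam * m * V₂ h) * y = μ * y := by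
  constructor
  · rintro ⟨u, p, hu, ⟨y, hy, hne⟩, hper, hjump⟩
    obtain ⟨huh, hph⟩ := hu.eq_fundamental_combination h₁ h₂ hV₁ hP₁ hV₂ hP₂ (right_mem_Icc.2 hh)
    refine ⟨u 0, p 0, ?_, by linear_combination hper - huh, ?_⟩
    · contrapose! hne
      obtain ⟨huy, hpy⟩ := hu.eq_fundamental_combination h₁ h₂ hV₁ hP₁ hV₂ hP₂ hy
      simp [huy, hpy, hne.1, hne.2]
    · have : p h = μ * (p 0 + lam * m * u 0) := by
        field_simp at hjump
        linear_combination hjump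
      linear_combination this - hph - lam * m * (hper - huh)
  · rintro ⟨x, y, hne, hper, hjump⟩
    have hsol := h₁.linearCombination h₂ x y
    refine ⟨_, _, hsol, ⟨0, left_mem_Icc.2 hh, ?_⟩, ?_, ?_⟩
    · simpa [hV₁, hP₁, hV₂, hP₂] using hne
    · simp only [hV₁, hV₂]
      linear_combination hper
    · simp only [hP₁, hP₂, hV₁, hV₂]
      field_simp
      linear_combination hjump + lam * m * hper

end SoftInclusion

open SoftInclusion in
theorem limit_spectrum_characterisation_general
    (h : ℝ) (hh0 : 0 < h)
    (a₀ ρ₀ ρ₁ : ℝ → ℝ)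
    (lam : ℝ) (v₁ p₁ v₂ p₂ : ℝ → ℝ)
    (hv₁ : ∀ y ∈ Icc (0:ℝ) h, HasDerivAt v₁ (p₁ y / a₀ y) y)
    (hp₁ : ∀ y ∈ Icc (0:ℝ) h, HasDerivAt p₁ (-(lam * ρ₀ y * v₁ y)) y)
    (hv₂ : ∀ y ∈ Icc (0:ℝ) h, HasDerivAt v₂ (p₂ y / a₀ y) y)
    (hp₂ : ∀ y ∈ Icc (0:ℝ) h, HasDerivAt p₂ (-(lam * ρ₀ y * v₂ y)) y)
    (hv₁0 : v₁ 0 = 1) (hp₁0 : p₁ 0 = 0) (hv₂0 : v₂ 0 = 0) (hp₂0 : p₂ 0 = 1) :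
    (∃ θ ∈ Ico (0:ℝ) (2 * π), ∃ u p : ℝ → ℂ,
        (∀ y ∈ Icc (0:ℝ) h, HasDerivAt u (p y / (a₀ y : ℂ)) y) ∧
        (∀ y ∈ Icc (0:ℝ) h, HasDerivAt p (-((lam : ℂ) * (ρ₀ y : ℂ) * u y)) y) ∧
        (∃ y ∈ Icc (0:ℝ) h, u y ≠ 0 ∨ p y ≠ 0) ∧
        u h = Complex.exp (θ * Complex.I) * u 0 ∧
        Complex.exp (-θ * Complex.I) * p h - p 0
          = (lam : ℂ) * u 0 * ((∫ y in h..(1:ℝ), ρ₁ y : ℝ) : ℂ))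
      ↔ |v₁ h + p₂ h - lam * v₂ h * ∫ y in h..(1:ℝ), ρ₁ y| ≤ 2 := by
  set m := ∫ y in h..(1:ℝ), ρ₁ y
  have hsol₁ := IsSolution.ofReal hv₁ hp₁
  have hsol₂ := IsSolution.ofReal hv₂ hp₂
  have hW : (v₁ h * p₂ h - v₂ h * p₁ h : ℂ) = 1 := by
    simpa [hv₁0, hp₁0, hv₂0, hp₂0] using hsol₁.wronskian_eq hsol₂ ⟨hh0.le, le_rfl⟩
  calc _ ↔ ∃ θ ∈ Ico (0:ℝ) (2 * π), ∃ x y : ℂ, (x ≠ 0 ∨ y ≠ 0) ∧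
        v₁ h * x + v₂ h * y = Complex.exp (θ * Complex.I) * x ∧
        (p₁ h - lam * m * v₁ h) * x + (p₂ h - lam * m * v₂ h) * y =
          Complex.exp (θ * Complex.I) * y := by
        refine exists_congr fun θ => and_congr_right fun _ => ?_
        simp_rw [neg_mul, Complex.exp_neg]
        simpa only [IsSolution, and_assoc] using exists_quasiperiodic_solution_iff hh0.le hsol₁
          hsol₂ (by simp [hv₁0]) (by simp [hp₁0]) (by simp [hv₂0]) (by simp [hp₂0])
          (Complex.exp_ne_zero _)
    _ ↔ ∃ θ ∈ Ico (0:ℝ) (2 * π), Complex.exp (θ * Complex.I) ^ 2 -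
          (v₁ h + p₂ h - lam * v₂ h * m : ℝ) * Complex.exp (θ * Complex.I) + 1 = 0 := by
        refine exists_congr fun θ => and_congr_right fun _ => ?_
        rw [exists_ne_zero_eigenvector_iff]
        exact iff_of_eq (congrArg (· = 0) (by push_cast; linear_combination hW))
    _ ↔ _ := by
        simp_rw [exp_mul_I_sq_sub_mul_add_one, mul_eq_zero, Complex.exp_ne_zero, false_or,
          sub_eq_zero]
        exact_mod_cast exists_two_mul_cos_eq_iff _

/-- `λ` belongs to the limit spectrum `∪_θ σ(A_θ)` (characterised by the
existence of a nontrivial quasi-periodic solution of the soft-inclusion equation with the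
co-derivative jump condition) if and only if `|F(λ)| ≤ 2`, where
`F(λ) = v₁(h) + p₂(h) − λ v₂(h) ∫_h^1 ρ₁`. -/
theorem limit_spectrum_characterisation
    (h : ℝ) (hh0 : 0 < h) (hh1 : h < 1)
    (a₀ ρ₀ ρ₁ : ℝ → ℝ)
    (ha₀c : ContinuousOn a₀ (Icc 0 h)) (ha₀p : ∀ y ∈ Icc (0:ℝ) h, 0 < a₀ y)
    (hρ₀c : ContinuousOn ρ₀ (Icc 0 h)) (hρ₀p : ∀ y ∈ Icc (0:ℝ) h, 0 < ρ₀ y)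
    (hρ₁c : ContinuousOn ρ₁ (Icc h 1)) (hρ₁p : ∀ y ∈ Icc h (1:ℝ), 0 < ρ₁ y)
    (lam : ℝ) (v₁ p₁ v₂ p₂ : ℝ → ℝ)
    (hv₁ : ∀ y ∈ Icc (0:ℝ) h, HasDerivAt v₁ (p₁ y / a₀ y) y)
    (hp₁ : ∀ y ∈ Icc (0:ℝ) h, HasDerivAt p₁ (-(lam * ρ₀ y * v₁ y)) y)
    (hv₂ : ∀ y ∈ Icc (0:ℝ) h, HasDerivAt v₂ (p₂ y / a₀ y) y)
    (hp₂ : ∀ y ∈ Icc (0:ℝ) h, HasDerivAt p₂ (-(lam * ρ₀ y * v₂ y)) y)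
    (hv₁0 : v₁ 0 = 1) (hp₁0 : p₁ 0 = 0) (hv₂0 : v₂ 0 = 0) (hp₂0 : p₂ 0 = 1) :
    (∃ θ ∈ Ico (0:ℝ) (2 * π), ∃ u p : ℝ → ℂ,
        (∀ y ∈ Icc (0:ℝ) h, HasDerivAt u (p y / (a₀ y : ℂ)) y) ∧
        (∀ y ∈ Icc (0:ℝ) h, HasDerivAt p (-((lam : ℂ) * (ρ₀ y : ℂ) * u y)) y) ∧
        (∃ y ∈ Icc (0:ℝ) h, u y ≠ 0 ∨ p y ≠ 0) ∧
        u h = Complex.exp (θ * Complex.I) * u 0 ∧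
        Complex.exp (-θ * Complex.I) * p h - p 0
          = (lam : ℂ) * u 0 * ((∫ y in h..(1:ℝ), ρ₁ y : ℝ) : ℂ))
      ↔ |v₁ h + p₂ h - lam * v₂ h * ∫ y in h..(1:ℝ), ρ₁ y| ≤ 2 :=
  limit_spectrum_characterisation_general h hh0 a₀ ρ₀ ρ₁ lam v₁ p₁ v₂ p₂ hv₁ hp₁ hv₂ hp₂ hv₁0 hp₁0
    hv₂0 hp₂0
end

section
/- Let λ₀ ∈ ℝ, let (v₁,p₁),(v₂,p₂) be the fundamental system at λ₀ and set R := ∫_h^1 ρ₁. Let z ∈ ℤ and l_z, m_z, l_{z+1}, m_{z+1} ∈ ℂ, and suppose the continuity condition l_{z+1} = l_z·v₁(h) + m_z·v₂(h) and the co-derivative jump condition m_{z+1} − (l_z·p₁(h) + m_z·p₂(h)) = −λ₀·(l_z·v₁(h) + m_z·v₂(h))·R hold. Then the vector (l_{z+1}, m_{z+1}) equals T applied to (l_z, m_z), where T is the 2×2 matrix with rows (v₁(h), v₂(h)) and (p₁(h) − λ₀·v₁(h)·R, p₂(h) − λ₀·v₂(h)·R). Moreover det T = 1 and trace T = F(λ₀),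 so the characteristic polynomial of T is μ² − F(λ₀)·μ + 1. -/
open Set

/-!
The transfer relation is a rewriting of the two interface conditions. The determinant of the
monodromy matrix is the Wronskian `v₁ p₂ - v₂ p₁` at `h`, and the Wronskian of two solutions
of `v' = p / a`, `p' = -q v` has derivative `p₁ p₂ / a - p₂ p₁ / a - q v₁ v₂ + q v₂ v₁ = 0`,
so it keeps its value `1` from `0`. A `2 × 2` matrix of determinant `1` and trace `F` has
characteristic polynomial `μ² - F μ + 1`.
-/

section Wronskian

variable {a q v₁ p₁ v₂ p₂ : ℝ → ℝ}

theorem hasDerivAt_wronskian {y : ℝ}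
    (hv₁ : HasDerivAt v₁ (p₁ y / a y) y) (hp₁ : HasDerivAt p₁ (-(q y * v₁ y)) y)
    (hv₂ : HasDerivAt v₂ (p₂ y / a y) y) (hp₂ : HasDerivAt p₂ (-(q y * v₂ y)) y) :
    HasDerivAt (fun x => v₁ x * p₂ x - v₂ x * p₁ x) 0 y :=
  ((hv₁.mul hp₂).sub (hv₂.mul hp₁)).congr_deriv (by ring)

theorem wronskian_right_eq_left {s t : ℝ} (hst : s ≤ t)
    (hv₁ : ∀ y ∈ Icc s t, HasDerivAt v₁ (p₁ y / a y) y)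
    (hp₁ : ∀ y ∈ Icc s t, HasDerivAt p₁ (-(q y * v₁ y)) y)
    (hv₂ : ∀ y ∈ Icc s t, HasDerivAt v₂ (p₂ y / a y) y)
    (hp₂ : ∀ y ∈ Icc s t, HasDerivAt p₂ (-(q y * v₂ y)) y) :
    v₁ t * p₂ t - v₂ t * p₁ t = v₁ s * p₂ s - v₂ s * p₁ s := by
  have hW : ∀ y ∈ Icc s t, HasDerivAt (fun x => v₁ x * p₂ x - v₂ x * p₁ x) 0 y :=
    fun y hy => hasDerivAt_wronskian (hv₁ y hy) (hp₁ y hy) (hv₂ y hy) (hp₂ y hy)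
  exact constant_of_has_deriv_right_zero
    (fun y hy => (hW y hy).continuousAt.continuousWithinAt)
    (fun y hy => (hW y (Ico_subset_Icc_self hy)).hasDerivWithinAt) t (right_mem_Icc.2 hst)

end Wronskian

theorem Matrix.det_smul_one_sub_fin_two {R : Type*} [CommRing R]
    (M : Matrix (Fin 2) (Fin 2) R) (μ : R) :
    (μ • (1 : Matrix (Fin 2) (Fin 2) R) - M).det = μ ^ 2 - M.trace * μ + M.det := by
  simp only [Matrix.det_fin_two, Matrix.trace_fin_two, Matrix.sub_apply, Matrix.smul_apply,
    Matrix.one_apply_eq, Matrix.one_apply_ne zero_ne_one, Matrix.one_apply_ne one_ne_zero,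
    smul_eq_mul]
  ring

theorem monodromy_matrix_general
    (h : ℝ) (hh0 : 0 < h)
    (a₀ ρ₀ : ℝ → ℝ)
    (lam₀ : ℝ) (v₁ p₁ v₂ p₂ : ℝ → ℝ)
    (hv₁ : ∀ y ∈ Icc (0:ℝ) h, HasDerivAt v₁ (p₁ y / a₀ y) y)
    (hp₁ : ∀ y ∈ Icc (0:ℝ) h, HasDerivAt p₁ (-(lam₀ * ρ₀ y * v₁ y)) y)
    (hv₂ : ∀ y ∈ Icc (0:ℝ) h, HasDerivAt v₂ (p₂ y / a₀ y) y)
    (hp₂ : ∀ y ∈ Icc (0:ℝ) h, HasDerivAt p₂ (-(lam₀ * ρ₀ y * v₂ y)) y)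
    (hv₁0 : v₁ 0 = 1) (hp₁0 : p₁ 0 = 0) (hv₂0 : v₂ 0 = 0) (hp₂0 : p₂ 0 = 1)
    (R : ℝ)
    (z : ℤ) (l m : ℤ → ℂ)
    (hcont : l (z + 1) = l z * (v₁ h : ℂ) + m z * (v₂ h : ℂ))
    (hjump : m (z + 1) - (l z * (p₁ h : ℂ) + m z * (p₂ h : ℂ))
      = -(lam₀ : ℂ) * (l z * (v₁ h : ℂ) + m z * (v₂ h : ℂ)) * (R : ℂ)) :
    (![l (z + 1), m (z + 1)]
        = Matrix.mulVec
            !![(v₁ h : ℂ), (v₂ h : ℂ);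
               ((p₁ h - lam₀ * v₁ h * R : ℝ) : ℂ), ((p₂ h - lam₀ * v₂ h * R : ℝ) : ℂ)]
            ![l z, m z]) ∧
    (Matrix.det
        !![(v₁ h : ℂ), (v₂ h : ℂ);
           ((p₁ h - lam₀ * v₁ h * R : ℝ) : ℂ), ((p₂ h - lam₀ * v₂ h * R : ℝ) : ℂ)] = 1) ∧
    (Matrix.trace
        !![(v₁ h : ℂ), (v₂ h : ℂ);
           ((p₁ h - lam₀ * v₁ h * R : ℝ) : ℂ), ((p₂ h - lam₀ * v₂ h * R : ℝ) : ℂ)]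
      = ((v₁ h + p₂ h - lam₀ * v₂ h * R : ℝ) : ℂ)) ∧
    (∀ μ : ℂ,
      Matrix.det
        (μ • (1 : Matrix (Fin 2) (Fin 2) ℂ)
          - !![(v₁ h : ℂ), (v₂ h : ℂ);
               ((p₁ h - lam₀ * v₁ h * R : ℝ) : ℂ), ((p₂ h - lam₀ * v₂ h * R : ℝ) : ℂ)])
      = μ ^ 2 - ((v₁ h + p₂ h - lam₀ * v₂ h * R : ℝ) : ℂ) * μ + 1) := by
  have hW : v₁ h * p₂ h - v₂ h * p₁ h = 1 := by
    simpa [hv₁0, hp₁0, hv₂0, hp₂0] using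
      wronskian_right_eq_left (q := fun y => lam₀ * ρ₀ y) hh0.le hv₁ hp₁ hv₂ hp₂
  have hWℂ : (v₁ h : ℂ) * p₂ h - v₂ h * p₁ h = 1 := by exact_mod_cast hW
  have hdet : Matrix.det !![(v₁ h : ℂ), (v₂ h : ℂ);
      ((p₁ h - lam₀ * v₁ h * R : ℝ) : ℂ), ((p₂ h - lam₀ * v₂ h * R : ℝ) : ℂ)] = 1 := by
    rw [Matrix.det_fin_two_of]
    push_cast
    linear_combination hWℂ
  have htrace : Matrix.trace !![(v₁ h : ℂ), (v₂ h : ℂ);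
      ((p₁ h - lam₀ * v₁ h * R : ℝ) : ℂ), ((p₂ h - lam₀ * v₂ h * R : ℝ) : ℂ)]
      = ((v₁ h + p₂ h - lam₀ * v₂ h * R : ℝ) : ℂ) := by
    rw [Matrix.trace_fin_two_of]
    push_cast
    ring
  refine ⟨?_, hdet, htrace, fun μ => by rw [Matrix.det_smul_one_sub_fin_two, hdet, htrace]⟩
  ext i
  fin_cases i
  · simp [Matrix.mulVec, dotProduct, hcont, mul_comm]
  · simp only [Fin.mk_one, Matrix.mulVec, dotProduct, Fin.sum_univ_two, Matrix.of_apply,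
      Matrix.cons_val', Matrix.cons_val_zero, Matrix.cons_val_one, Matrix.cons_val_fin_one,
      Complex.ofReal_sub, Complex.ofReal_mul]
    linear_combination hjump

/-- The one-period transfer relation of the homogenised problem: the
continuity and co-derivative jump conditions for the coefficients `(l_z, m_z)` are equivalent
to multiplication by the monodromy matrix `T`, which has determinant `1`, trace `F(λ₀)`, and
characteristic polynomial `μ² − F(λ₀)μ + 1`. -/
theorem monodromy_matrix
    (h : ℝ) (hh0 : 0 < h) (hh1 : h < 1)
    (a₀ ρ₀ ρ₁ : ℝ → ℝ)
    (ha₀c : ContinuousOn a₀ (Icc 0 h)) (ha₀p : ∀ y ∈ Icc (0:ℝ) h, 0 < a₀ y)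
    (hρ₀c : ContinuousOn ρ₀ (Icc 0 h)) (hρ₀p : ∀ y ∈ Icc (0:ℝ) h, 0 < ρ₀ y)
    (hρ₁c : ContinuousOn ρ₁ (Icc h 1)) (hρ₁p : ∀ y ∈ Icc h (1:ℝ), 0 < ρ₁ y)
    (lam₀ : ℝ) (v₁ p₁ v₂ p₂ : ℝ → ℝ)
    (hv₁ : ∀ y ∈ Icc (0:ℝ) h, HasDerivAt v₁ (p₁ y / a₀ y) y)
    (hp₁ : ∀ y ∈ Icc (0:ℝ) h, HasDerivAt p₁ (-(lam₀ * ρ₀ y * v₁ y)) y)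
    (hv₂ : ∀ y ∈ Icc (0:ℝ) h, HasDerivAt v₂ (p₂ y / a₀ y) y)
    (hp₂ : ∀ y ∈ Icc (0:ℝ) h, HasDerivAt p₂ (-(lam₀ * ρ₀ y * v₂ y)) y)
    (hv₁0 : v₁ 0 = 1) (hp₁0 : p₁ 0 = 0) (hv₂0 : v₂ 0 = 0) (hp₂0 : p₂ 0 = 1)
    (R : ℝ) (hR : R = ∫ y in h..(1:ℝ), ρ₁ y)
    (z : ℤ) (l m : ℤ → ℂ)
    (hcont : l (z + 1) = l z * (v₁ h : ℂ) + m z * (v₂ h : ℂ))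
    (hjump : m (z + 1) - (l z * (p₁ h : ℂ) + m z * (p₂ h : ℂ))
      = -(lam₀ : ℂ) * (l z * (v₁ h : ℂ) + m z * (v₂ h : ℂ)) * (R : ℂ)) :
    (![l (z + 1), m (z + 1)]
        = Matrix.mulVec
            !![(v₁ h : ℂ), (v₂ h : ℂ);
               ((p₁ h - lam₀ * v₁ h * R : ℝ) : ℂ), ((p₂ h - lam₀ * v₂ h * R : ℝ) : ℂ)]
            ![l z, m z]) ∧
    (Matrix.det
        !![(v₁ h : ℂ), (v₂ h : ℂ);
           ((p₁ h - lam₀ * v₁ h * R : ℝ) : ℂ), ((p₂ h - lam₀ * v₂ h * R : ℝ) : ℂ)] = 1) ∧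
    (Matrix.trace
        !![(v₁ h : ℂ), (v₂ h : ℂ);
           ((p₁ h - lam₀ * v₁ h * R : ℝ) : ℂ), ((p₂ h - lam₀ * v₂ h * R : ℝ) : ℂ)]
      = ((v₁ h + p₂ h - lam₀ * v₂ h * R : ℝ) : ℂ)) ∧
    (∀ μ : ℂ,
      Matrix.det
        (μ • (1 : Matrix (Fin 2) (Fin 2) ℂ)
          - !![(v₁ h : ℂ), (v₂ h : ℂ);
               ((p₁ h - lam₀ * v₁ h * R : ℝ) : ℂ), ((p₂ h - lam₀ * v₂ h * R : ℝ) : ℂ)])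
      = μ ^ 2 - ((v₁ h + p₂ h - lam₀ * v₂ h * R : ℝ) : ℂ) * μ + 1) :=
  monodromy_matrix_general h hh0 a₀ ρ₀ lam₀ v₁ p₁ v₂ p₂ hv₁ hp₁ hv₂ hp₂ hv₁0 hp₁0 hv₂0 hp₂0 R z l m
    hcont hjump
end

section
/- Let λ_ε ∈ ℝ for ε ∈ (0,1) with λ_ε → λ₀ as ε → 0. For each ε let (v₁^ε,p₁^ε),(v₂^ε,p₂^ε) be the fundamental system at λ_ε on the soft interval and let (w₁^ε,q₁^ε),(w₂^ε,q₂^ε) be the stiff fundamental system at (λ_ε,ε), and define h_ε := v₁^ε(h)·w₁^ε(1) + ε²·p₁^ε(h)·w₂^ε(1) + ε^{−2}·v₂^ε(h)·q₁^ε(1) + p₂^ε(h)·q₂^ε(1). Then h_ε → v₁(h) + p₂(h) − λ₀·v₂(h)·∫_h^1 ρ₁ as ε → 0, where (v₁,p₁),(v₂,p₂) is the fundamental system at λ₀ on the soft interval. -/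
/-!
On the soft interval the fundamental system depends continuously on the spectral parameter
(Grönwall), so `vⱼ^ε(h), pⱼ^ε(h) → vⱼ(h), pⱼ(h)`. On the stiff interval the parameter `ε² λ_ε`
tends to `0`, so the stiff solutions converge uniformly to constant solutions: `w₁^ε → 1`,
`q₂^ε(1) → 1`, and `w₂^ε` stays bounded. The singular term is handled by integrating the equation
for `q₁^ε`: `ε⁻² q₁^ε(1) = -λ_ε ∫_h^1 ρ₁ w₁^ε → -λ₀ ∫_h^1 ρ₁`.
-/

open Set Filter Topology

/-- First-order form of `-(a v')' = μ ρ v` on `[s, t]`, with `p = a v'` the co-derivative. -/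
def IsSturmLiouvilleSolution (a ρ : ℝ → ℝ) (μ s t : ℝ) (v p : ℝ → ℝ) : Prop :=
  ∀ y ∈ Icc s t, HasDerivAt v (p y / a y) y ∧ HasDerivAt p (-(μ * ρ y * v y)) y

section SturmLiouville

variable {a ρ v p V P : ℝ → ℝ} {μ ν s t : ℝ}

theorem isSturmLiouvilleSolution_const (a ρ : ℝ → ℝ) (s t c : ℝ) :
    IsSturmLiouvilleSolution a ρ 0 s t (fun _ => c) (fun _ => 0) := fun y _ => by
  simpa using ⟨hasDerivAt_const y c, hasDerivAt_const y (0 : ℝ)⟩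

namespace IsSturmLiouvilleSolution

theorem continuousOn (hvp : IsSturmLiouvilleSolution a ρ μ s t v p) :
    ContinuousOn v (Icc s t) := fun y hy =>
  (hvp y hy).1.continuousAt.continuousWithinAt

theorem norm_sub_le_gronwallBound {A R L M : ℝ} (hvp : IsSturmLiouvilleSolution a ρ μ s t v p)
    (hVP : IsSturmLiouvilleSolution a ρ ν s t V P) (ha : ∀ y ∈ Icc s t, |(a y)⁻¹| ≤ A)
    (hρ : ∀ y ∈ Icc s t, |ρ y| ≤ R) (hμ : |μ| ≤ L) (hV : ∀ y ∈ Icc s t, |V y| ≤ M) :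
    ∀ y ∈ Icc s t, ‖(v y - V y, p y - P y)‖ ≤
      gronwallBound ‖(v s - V s, p s - P s)‖ (A + L * R) (|μ - ν| * R * M) (t - s) := by
  intro y hy
  have hA : 0 ≤ A := (abs_nonneg _).trans (ha y hy)
  have hR : 0 ≤ R := (abs_nonneg _).trans (hρ y hy)
  have hM : 0 ≤ M := (abs_nonneg _).trans (hV y hy)
  have hL : 0 ≤ L := (abs_nonneg _).trans hμ
  have hderiv : ∀ x ∈ Icc s t, HasDerivAt (fun y => (v y - V y, p y - P y))
      ((p x - P x) / a x, -(μ * ρ x * (v x - V x)) - (μ - ν) * ρ x * V x) x := by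
    intro x hx
    obtain ⟨hv, hp⟩ := hvp x hx
    obtain ⟨hV, hP⟩ := hVP x hx
    exact (sub_div (p x) (P x) (a x) ▸ hv.sub hV).prodMk ((hp.sub hP).congr_deriv (by ring))
  have hbound : ∀ x ∈ Ico s t, ‖((p x - P x) / a x, -(μ * ρ x * (v x - V x)) - (μ - ν) * ρ x * V x)‖
      ≤ (A + L * R) * ‖(v x - V x, p x - P x)‖ + |μ - ν| * R * M := by
    intro x hx
    have hx := Ico_subset_Icc_self hx
    have h₁ : |v x - V x| ≤ ‖(v x - V x, p x - P x)‖ := norm_fst_le (v x - V x, p x - P x)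
    have h₂ : |p x - P x| ≤ ‖(v x - V x, p x - P x)‖ := norm_snd_le (v x - V x, p x - P x)
    have hμρ : |μ * ρ x| ≤ L * R := by rw [abs_mul]; gcongr; exact hρ x hx
    refine (Prod.norm_def _).trans_le (max_le ?_ ?_) <;> simp only [Real.norm_eq_abs]
    · calc |(p x - P x) / a x| = |(a x)⁻¹| * |p x - P x| := by rw [div_eq_inv_mul, abs_mul]
        _ ≤ A * ‖(v x - V x, p x - P x)‖ := by gcongr; exact ha x hx
        _ ≤ _ := by nlinarith [norm_nonneg (v x - V x, p x - P x), mul_nonneg hL hR,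
            abs_nonneg (μ - ν), mul_nonneg (mul_nonneg (abs_nonneg (μ - ν)) hR) hM]
    · calc |-(μ * ρ x * (v x - V x)) - (μ - ν) * ρ x * V x|
          ≤ |μ * ρ x| * |v x - V x| + |μ - ν| * |ρ x| * |V x| := by
            refine (abs_sub _ _).trans_eq ?_
            rw [abs_neg, abs_mul (μ * ρ x), abs_mul ((μ - ν) * ρ x), abs_mul (μ - ν)]
        _ ≤ (L * R) * ‖(v x - V x, p x - P x)‖ + |μ - ν| * R * M := by
            gcongr
            exacts [hρ x hx, hV x hx]
        _ ≤ _ := by nlinarith [norm_nonneg (v x - V x, p x - P x)]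
  exact (norm_le_gronwallBound_of_norm_deriv_right_le
    (fun x hx => (hderiv x hx).continuousAt.continuousWithinAt)
    (fun x hx => (hderiv x (Ico_subset_Icc_self hx)).hasDerivWithinAt) le_rfl hbound y hy).trans
    (gronwallBound_mono (norm_nonneg _) (by positivity) (by positivity) (by linarith [hy.2]))

theorem sub_eq_neg_mul_integral (hvp : IsSturmLiouvilleSolution a ρ μ s t v p)
    (hρ : ContinuousOn ρ (Icc s t)) (hst : s ≤ t) :
    p t - p s = -(μ * ∫ y in s..t, ρ y * v y) := by
  have hcont : ContinuousOn (fun y => ρ y * v y) (uIcc s t) := by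
    rw [uIcc_of_le hst]; exact hρ.mul hvp.continuousOn
  rw [← intervalIntegral.integral_eq_sub_of_hasDerivAt (f' := fun y => -(μ * (ρ y * v y)))
    (fun y hy => ((hvp y (uIcc_of_le hst ▸ hy)).2).congr_deriv (by ring))
    ((hcont.intervalIntegrable).const_mul μ).neg]
  rw [intervalIntegral.integral_neg, intervalIntegral.integral_const_mul]

end IsSturmLiouvilleSolution

end SturmLiouville

theorem eventually_abs_le_of_tendsto {ι : Type*} {l : Filter ι} {μ : ι → ℝ} {ν : ℝ}
    (hμ : Tendsto μ l (𝓝 ν)) : ∀ᶠ i in l, |μ i| ≤ |ν| + 1 :=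
  (hμ.abs.eventually_lt_const (lt_add_one |ν|)).mono fun _ h => h.le

theorem tendstoUniformlyOn_of_eventually_dist_le {ι α β : Type*} [PseudoMetricSpace β]
    {l : Filter ι} {F : ι → α → β} {f : α → β} {S : Set α} {g : ι → ℝ}
    (h : ∀ᶠ i in l, ∀ x ∈ S, dist (f x) (F i x) ≤ g i) (hg : Tendsto g l (𝓝 0)) :
    TendstoUniformlyOn F f l S :=
  Metric.tendstoUniformlyOn_iff.2 fun ε hε => by
    filter_upwards [h, hg.eventually (gt_mem_nhds hε)] with i hi hgi x hx
    exact (hi x hx).trans_lt hgi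

theorem TendstoUniformlyOn.mul_left_of_abs_le {ι α : Type*} {l : Filter ι} {F : ι → α → ℝ}
    {f g : α → ℝ} {S : Set α} {R : ℝ} (hF : TendstoUniformlyOn F f l S)
    (hg : ∀ x ∈ S, |g x| ≤ R) :
    TendstoUniformlyOn (fun i x => g x * F i x) (fun x => g x * f x) l S := by
  rw [Metric.tendstoUniformlyOn_iff] at hF ⊢
  intro ε hε
  filter_upwards [hF (ε / (|R| + 1)) (by positivity)] with i hi x hx
  rw [Real.dist_eq, ← mul_sub, abs_mul, ← Real.dist_eq]
  calc |g x| * dist (f x) (F i x) ≤ (|R| + 1) * dist (f x) (F i x) := by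
        gcongr; linarith [le_abs_self R, hg x hx]
    _ < (|R| + 1) * (ε / (|R| + 1)) := by gcongr; exact hi x hx
    _ = ε := by field_simp

section ParameterDependence

variable {ι : Type*} {l : Filter ι} {a ρ V P : ℝ → ℝ} {v p : ι → ℝ → ℝ} {μ : ι → ℝ} {ν s t : ℝ}

theorem tendstoUniformlyOn_of_isSturmLiouvilleSolution (ha : ContinuousOn a (Icc s t))
    (ha₀ : ∀ y ∈ Icc s t, a y ≠ 0) (hρ : ContinuousOn ρ (Icc s t)) (hμ : Tendsto μ l (𝓝 ν))
    (hvp : ∀ᶠ i in l, IsSturmLiouvilleSolution a ρ (μ i) s t (v i) (p i))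
    (hVP : IsSturmLiouvilleSolution a ρ ν s t V P)
    (hinit : ∀ᶠ i in l, v i s = V s ∧ p i s = P s) :
    TendstoUniformlyOn (fun i y => (v i y, p i y)) (fun y => (V y, P y)) l (Icc s t) := by
  obtain ⟨A, hA⟩ := isCompact_Icc.exists_bound_of_continuousOn (ha.inv₀ ha₀)
  obtain ⟨R, hR⟩ := isCompact_Icc.exists_bound_of_continuousOn hρ
  obtain ⟨M, hM⟩ := isCompact_Icc.exists_bound_of_continuousOn hVP.continuousOn
  set K := A + (|ν| + 1) * R
  have hdist : Tendsto (fun i => |μ i - ν| * R * M) l (𝓝 0) := by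
    simpa using ((hμ.sub_const ν).abs.mul_const R).mul_const M
  have hgron : Tendsto (fun i => gronwallBound 0 K (|μ i - ν| * R * M) (t - s)) l (𝓝 0) := by
    have := ((gronwallBound_continuous_ε 0 K (t - s)).tendsto 0).comp hdist
    rwa [gronwallBound_ε0_δ0] at this
  refine tendstoUniformlyOn_of_eventually_dist_le ?_ hgron
  filter_upwards [hvp, hinit, eventually_abs_le_of_tendsto hμ] with i hi hi₀ hμi y hy
  have := hi.norm_sub_le_gronwallBound hVP hA hR hμi hM y hy
  rwa [hi₀.1, hi₀.2, sub_self, sub_self, Prod.mk_zero_zero, norm_zero, ← Prod.mk_sub_mk,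
    ← dist_eq_norm, dist_comm] at this

theorem exists_eventually_abs_le_of_isSturmLiouvilleSolution (ha : ContinuousOn a (Icc s t))
    (ha₀ : ∀ y ∈ Icc s t, a y ≠ 0) (hρ : ContinuousOn ρ (Icc s t)) (hμ : Tendsto μ l (𝓝 ν))
    (hvp : ∀ᶠ i in l, IsSturmLiouvilleSolution a ρ (μ i) s t (v i) (p i)) {v₀ p₀ : ℝ}
    (hinit : ∀ᶠ i in l, v i s = v₀ ∧ p i s = p₀) :
    ∃ C, ∀ᶠ i in l, ∀ y ∈ Icc s t, |v i y| ≤ C := by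
  obtain ⟨A, hA⟩ := isCompact_Icc.exists_bound_of_continuousOn (ha.inv₀ ha₀)
  obtain ⟨R, hR⟩ := isCompact_Icc.exists_bound_of_continuousOn hρ
  refine ⟨gronwallBound ‖(v₀, p₀)‖ (A + (|ν| + 1) * R) 0 (t - s), ?_⟩
  filter_upwards [hvp, hinit, eventually_abs_le_of_tendsto hμ] with i hi hi₀ hμi y hy
  have := hi.norm_sub_le_gronwallBound (isSturmLiouvilleSolution_const a ρ s t 0) hA hR hμi
    (M := 0) (by simp) y hy
  simp only [sub_zero, mul_zero, hi₀.1, hi₀.2] at this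
  exact (norm_fst_le (v i y, p i y)).trans this

theorem tendsto_of_isSturmLiouvilleSolution_of_tendsto_zero (ha : ContinuousOn a (Icc s t))
    (ha₀ : ∀ y ∈ Icc s t, a y ≠ 0) (hρ : ContinuousOn ρ (Icc s t)) (hst : s ≤ t)
    (hμ : Tendsto μ l (𝓝 0))
    (hvp : ∀ᶠ i in l, IsSturmLiouvilleSolution a ρ (μ i) s t (v i) (p i)) {v₀ p₀ : ℝ}
    (hinit : ∀ᶠ i in l, v i s = v₀ ∧ p i s = p₀) :
    Tendsto (fun i => p i t) l (𝓝 p₀) := by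
  obtain ⟨C, hC⟩ := exists_eventually_abs_le_of_isSturmLiouvilleSolution ha ha₀ hρ hμ hvp hinit
  obtain ⟨R, hR⟩ := isCompact_Icc.exists_bound_of_continuousOn hρ
  have hbdd : IsBoundedUnder (· ≤ ·) l fun i => ‖∫ y in s..t, ρ y * v i y‖ := by
    refine isBoundedUnder_of_eventually_le (a := R * C * |t - s|) (hC.mono fun i hi => ?_)
    refine intervalIntegral.norm_integral_le_of_norm_le_const fun y hy => ?_
    have hy : y ∈ Icc s t := Ioc_subset_Icc_self (uIoc_of_le hst ▸ hy)
    rw [norm_mul]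
    exact mul_le_mul (hR y hy) (hi y hy) (norm_nonneg _) ((norm_nonneg _).trans (hR y hy))
  have hp : ∀ᶠ i in l, p₀ - μ i * ∫ y in s..t, ρ y * v i y = p i t := by
    filter_upwards [hvp, hinit] with i hi hi₀
    linarith [hi.sub_eq_neg_mul_integral hρ hst]
  simpa using ((hμ.zero_mul_isBoundedUnder_le hbdd).const_sub p₀).congr' hp

theorem tendsto_div_of_isSturmLiouvilleSolution [l.IsCountablyGenerated]
    (ha : ContinuousOn a (Icc s t)) (ha₀ : ∀ y ∈ Icc s t, a y ≠ 0)
    (hρ : ContinuousOn ρ (Icc s t)) (hst : s ≤ t) {c lam : ι → ℝ} {lam₀ : ℝ}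
    (hc : Tendsto c l (𝓝 0)) (hc₀ : ∀ᶠ i in l, c i ≠ 0) (hlam : Tendsto lam l (𝓝 lam₀))
    (hvp : ∀ᶠ i in l, IsSturmLiouvilleSolution a ρ (c i * lam i) s t (v i) (p i))
    (hinit : ∀ᶠ i in l, v i s = 1 ∧ p i s = 0) :
    Tendsto (fun i => p i t / c i) l (𝓝 (-(lam₀ * ∫ y in s..t, ρ y))) := by
  have hμ : Tendsto (fun i => c i * lam i) l (𝓝 0) := by simpa using hc.mul hlam
  have hv := uniformContinuous_fst.comp_tendstoUniformlyOn <|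
    tendstoUniformlyOn_of_isSturmLiouvilleSolution ha ha₀ hρ hμ hvp
      (isSturmLiouvilleSolution_const a ρ s t 1) hinit
  obtain ⟨R, hR⟩ := isCompact_Icc.exists_bound_of_continuousOn hρ
  have hint : Tendsto (fun i => ∫ y in s..t, ρ y * v i y) l (𝓝 (∫ y in s..t, ρ y * 1)) := by
    refine TendstoUniformlyOn.tendsto_intervalIntegral_of_continuousOn ?_ ?_
    · filter_upwards [hvp] with i hi
      exact uIcc_of_le hst ▸ hρ.mul hi.continuousOn
    · exact uIcc_of_le hst ▸ hv.mul_left_of_abs_le hR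
  have hp : ∀ᶠ i in l, -(lam i * ∫ y in s..t, ρ y * v i y) = p i t / c i := by
    filter_upwards [hvp, hinit, hc₀] with i hi hi₀ hci
    rw [eq_div_iff hci, ← sub_zero (p i t), ← hi₀.2, hi.sub_eq_neg_mul_integral hρ hst]
    ring
  simpa using (hlam.mul hint).neg.congr' hp

end ParameterDependence

theorem transfer_trace_convergence_general
    (h : ℝ) (hh0 : 0 < h) (hh1 : h < 1)
    (a₀ ρ₀ a₁ ρ₁ : ℝ → ℝ)
    (ha₀c : ContinuousOn a₀ (Icc 0 h)) (ha₀p : ∀ y ∈ Icc (0:ℝ) h, 0 < a₀ y)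
    (hρ₀c : ContinuousOn ρ₀ (Icc 0 h))
    (ha₁c : ContinuousOn a₁ (Icc h 1)) (ha₁p : ∀ y ∈ Icc h (1:ℝ), 0 < a₁ y)
    (hρ₁c : ContinuousOn ρ₁ (Icc h 1))
    (lam₀ : ℝ) (lam : ℝ → ℝ)
    (hlam : Tendsto lam (nhdsWithin 0 (Ioo 0 1)) (nhds lam₀))
    -- soft fundamental system at `λ_ε`, for each `ε ∈ (0,1)`
    (vε₁ pε₁ vε₂ pε₂ : ℝ → ℝ → ℝ)
    (hvε₁ : ∀ ε ∈ Ioo (0:ℝ) 1, ∀ y ∈ Icc (0:ℝ) h,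
      HasDerivAt (vε₁ ε) (pε₁ ε y / a₀ y) y)
    (hpε₁ : ∀ ε ∈ Ioo (0:ℝ) 1, ∀ y ∈ Icc (0:ℝ) h,
      HasDerivAt (pε₁ ε) (-(lam ε * ρ₀ y * vε₁ ε y)) y)
    (hvε₂ : ∀ ε ∈ Ioo (0:ℝ) 1, ∀ y ∈ Icc (0:ℝ) h,
      HasDerivAt (vε₂ ε) (pε₂ ε y / a₀ y) y)
    (hpε₂ : ∀ ε ∈ Ioo (0:ℝ) 1, ∀ y ∈ Icc (0:ℝ) h,
      HasDerivAt (pε₂ ε) (-(lam ε * ρ₀ y * vε₂ ε y)) y)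
    (hicε : ∀ ε ∈ Ioo (0:ℝ) 1,
      vε₁ ε 0 = 1 ∧ pε₁ ε 0 = 0 ∧ vε₂ ε 0 = 0 ∧ pε₂ ε 0 = 1)
    -- stiff fundamental system at `(λ_ε, ε)`, for each `ε ∈ (0,1)`
    (wε₁ qε₁ wε₂ qε₂ : ℝ → ℝ → ℝ)
    (hwε₁ : ∀ ε ∈ Ioo (0:ℝ) 1, ∀ y ∈ Icc h (1:ℝ),
      HasDerivAt (wε₁ ε) (qε₁ ε y / a₁ y) y)
    (hqε₁ : ∀ ε ∈ Ioo (0:ℝ) 1, ∀ y ∈ Icc h (1:ℝ),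
      HasDerivAt (qε₁ ε) (-(ε ^ 2 * lam ε * ρ₁ y * wε₁ ε y)) y)
    (hwε₂ : ∀ ε ∈ Ioo (0:ℝ) 1, ∀ y ∈ Icc h (1:ℝ),
      HasDerivAt (wε₂ ε) (qε₂ ε y / a₁ y) y)
    (hqε₂ : ∀ ε ∈ Ioo (0:ℝ) 1, ∀ y ∈ Icc h (1:ℝ),
      HasDerivAt (qε₂ ε) (-(ε ^ 2 * lam ε * ρ₁ y * wε₂ ε y)) y)
    (hicw : ∀ ε ∈ Ioo (0:ℝ) 1,
      wε₁ ε h = 1 ∧ qε₁ ε h = 0 ∧ wε₂ ε h = 0 ∧ qε₂ ε h = 1)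
    -- soft fundamental system at `λ₀`
    (v₁ p₁ v₂ p₂ : ℝ → ℝ)
    (hv₁ : ∀ y ∈ Icc (0:ℝ) h, HasDerivAt v₁ (p₁ y / a₀ y) y)
    (hp₁ : ∀ y ∈ Icc (0:ℝ) h, HasDerivAt p₁ (-(lam₀ * ρ₀ y * v₁ y)) y)
    (hv₂ : ∀ y ∈ Icc (0:ℝ) h, HasDerivAt v₂ (p₂ y / a₀ y) y)
    (hp₂ : ∀ y ∈ Icc (0:ℝ) h, HasDerivAt p₂ (-(lam₀ * ρ₀ y * v₂ y)) y)
    (hv₁0 : v₁ 0 = 1) (hp₁0 : p₁ 0 = 0) (hv₂0 : v₂ 0 = 0) (hp₂0 : p₂ 0 = 1) :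
    Tendsto
      (fun ε : ℝ =>
        vε₁ ε h * wε₁ ε 1 + ε ^ 2 * pε₁ ε h * wε₂ ε 1
          + (1 / ε ^ 2) * vε₂ ε h * qε₁ ε 1 + pε₂ ε h * qε₂ ε 1)
      (nhdsWithin 0 (Ioo 0 1))
      (nhds (v₁ h + p₂ h - lam₀ * v₂ h * ∫ y in h..(1:ℝ), ρ₁ y)) := by
  set l := 𝓝[Ioo 0 1] (0 : ℝ)
  have hε : ∀ᶠ ε in l, ε ∈ Ioo (0 : ℝ) 1 := self_mem_nhdsWithin
  have hsq : Tendsto (fun ε : ℝ => ε ^ 2) l (𝓝 0) :=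
    ((continuous_pow 2).tendsto' 0 0 (zero_pow two_ne_zero)).mono_left nhdsWithin_le_nhds
  have hstiff : Tendsto (fun ε => ε ^ 2 * lam ε) l (𝓝 0) := by simpa using hsq.mul hlam
  have ha₀ : ∀ y ∈ Icc 0 h, a₀ y ≠ 0 := fun y hy => (ha₀p y hy).ne'
  have ha₁ : ∀ y ∈ Icc h 1, a₁ y ≠ 0 := fun y hy => (ha₁p y hy).ne'
  have soft₁ := (tendstoUniformlyOn_of_isSturmLiouvilleSolution ha₀c ha₀ hρ₀c hlam
    (hε.mono fun ε hε y hy => ⟨hvε₁ ε hε y hy, hpε₁ ε hε y hy⟩) (fun y hy => ⟨hv₁ y hy, hp₁ y hy⟩)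
    (hε.mono fun ε hε => by simp [hicε ε hε, hv₁0, hp₁0])).tendsto_at ⟨hh0.le, le_rfl⟩
  have soft₂ := (tendstoUniformlyOn_of_isSturmLiouvilleSolution ha₀c ha₀ hρ₀c hlam
    (hε.mono fun ε hε y hy => ⟨hvε₂ ε hε y hy, hpε₂ ε hε y hy⟩) (fun y hy => ⟨hv₂ y hy, hp₂ y hy⟩)
    (hε.mono fun ε hε => by simp [hicε ε hε, hv₂0, hp₂0])).tendsto_at ⟨hh0.le, le_rfl⟩
  have hw₁ := hε.mono fun ε hε y hy => And.intro (hwε₁ ε hε y hy) (hqε₁ ε hε y hy)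
  have hw₂ := hε.mono fun ε hε y hy => And.intro (hwε₂ ε hε y hy) (hqε₂ ε hε y hy)
  have hinit₁ := hε.mono fun ε hε => And.intro (hicw ε hε).1 (hicw ε hε).2.1
  have hinit₂ := hε.mono fun ε hε => And.intro (hicw ε hε).2.2.1 (hicw ε hε).2.2.2
  have hw₁1 := ((tendstoUniformlyOn_of_isSturmLiouvilleSolution ha₁c ha₁ hρ₁c hstiff hw₁
    (isSturmLiouvilleSolution_const a₁ ρ₁ h 1 1) hinit₁).tendsto_at ⟨hh1.le, le_rfl⟩).fst_nhds
  have hq₁1 := tendsto_div_of_isSturmLiouvilleSolution ha₁c ha₁ hρ₁c hh1.le hsq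
    (hε.mono fun ε hε => pow_ne_zero 2 hε.1.ne') hlam hw₁ hinit₁
  have hq₂1 := tendsto_of_isSturmLiouvilleSolution_of_tendsto_zero ha₁c ha₁ hρ₁c hh1.le hstiff
    hw₂ hinit₂
  obtain ⟨C, hC⟩ := exists_eventually_abs_le_of_isSturmLiouvilleSolution ha₁c ha₁ hρ₁c hstiff
    hw₂ hinit₂
  have hmid : Tendsto (fun ε => ε ^ 2 * pε₁ ε h * wε₂ ε 1) l (𝓝 0) := by
    refine Tendsto.zero_mul_isBoundedUnder_le (by simpa using hsq.mul soft₁.snd_nhds) ?_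
    exact isBoundedUnder_of_eventually_le (hC.mono fun ε hε => hε 1 ⟨hh1.le, le_rfl⟩)
  have hsum := (((soft₁.fst_nhds.mul hw₁1).add hmid).add (soft₂.fst_nhds.mul hq₁1)).add
    (soft₂.snd_nhds.mul hq₂1)
  convert hsum using 2 <;> ring

/-- Convergence of the trace `h_ε` of the one-period transfer matrix of the
rescaled high-contrast problem: `h_ε → v₁(h) + p₂(h) − λ₀ v₂(h) ∫_h^1 ρ₁` as `ε → 0`. -/
theorem transfer_trace_convergence
    (h : ℝ) (hh0 : 0 < h) (hh1 : h < 1)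
    (a₀ ρ₀ a₁ ρ₁ : ℝ → ℝ)
    (ha₀c : ContinuousOn a₀ (Icc 0 h)) (ha₀p : ∀ y ∈ Icc (0:ℝ) h, 0 < a₀ y)
    (hρ₀c : ContinuousOn ρ₀ (Icc 0 h)) (hρ₀p : ∀ y ∈ Icc (0:ℝ) h, 0 < ρ₀ y)
    (ha₁c : ContinuousOn a₁ (Icc h 1)) (ha₁p : ∀ y ∈ Icc h (1:ℝ), 0 < a₁ y)
    (hρ₁c : ContinuousOn ρ₁ (Icc h 1)) (hρ₁p : ∀ y ∈ Icc h (1:ℝ), 0 < ρ₁ y)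
    (lam₀ : ℝ) (lam : ℝ → ℝ)
    (hlam : Tendsto lam (nhdsWithin 0 (Ioo 0 1)) (nhds lam₀))
    -- soft fundamental system at `λ_ε`, for each `ε ∈ (0,1)`
    (vε₁ pε₁ vε₂ pε₂ : ℝ → ℝ → ℝ)
    (hvε₁ : ∀ ε ∈ Ioo (0:ℝ) 1, ∀ y ∈ Icc (0:ℝ) h,
      HasDerivAt (vε₁ ε) (pε₁ ε y / a₀ y) y)
    (hpε₁ : ∀ ε ∈ Ioo (0:ℝ) 1, ∀ y ∈ Icc (0:ℝ) h,
      HasDerivAt (pε₁ ε) (-(lam ε * ρ₀ y * vε₁ ε y)) y)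
    (hvε₂ : ∀ ε ∈ Ioo (0:ℝ) 1, ∀ y ∈ Icc (0:ℝ) h,
      HasDerivAt (vε₂ ε) (pε₂ ε y / a₀ y) y)
    (hpε₂ : ∀ ε ∈ Ioo (0:ℝ) 1, ∀ y ∈ Icc (0:ℝ) h,
      HasDerivAt (pε₂ ε) (-(lam ε * ρ₀ y * vε₂ ε y)) y)
    (hicε : ∀ ε ∈ Ioo (0:ℝ) 1,
      vε₁ ε 0 = 1 ∧ pε₁ ε 0 = 0 ∧ vε₂ ε 0 = 0 ∧ pε₂ ε 0 = 1)
    -- stiff fundamental system at `(λ_ε, ε)`, for each `ε ∈ (0,1)`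
    (wε₁ qε₁ wε₂ qε₂ : ℝ → ℝ → ℝ)
    (hwε₁ : ∀ ε ∈ Ioo (0:ℝ) 1, ∀ y ∈ Icc h (1:ℝ),
      HasDerivAt (wε₁ ε) (qε₁ ε y / a₁ y) y)
    (hqε₁ : ∀ ε ∈ Ioo (0:ℝ) 1, ∀ y ∈ Icc h (1:ℝ),
      HasDerivAt (qε₁ ε) (-(ε ^ 2 * lam ε * ρ₁ y * wε₁ ε y)) y)
    (hwε₂ : ∀ ε ∈ Ioo (0:ℝ) 1, ∀ y ∈ Icc h (1:ℝ),
      HasDerivAt (wε₂ ε) (qε₂ ε y / a₁ y) y)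
    (hqε₂ : ∀ ε ∈ Ioo (0:ℝ) 1, ∀ y ∈ Icc h (1:ℝ),
      HasDerivAt (qε₂ ε) (-(ε ^ 2 * lam ε * ρ₁ y * wε₂ ε y)) y)
    (hicw : ∀ ε ∈ Ioo (0:ℝ) 1,
      wε₁ ε h = 1 ∧ qε₁ ε h = 0 ∧ wε₂ ε h = 0 ∧ qε₂ ε h = 1)
    -- soft fundamental system at `λ₀`
    (v₁ p₁ v₂ p₂ : ℝ → ℝ)
    (hv₁ : ∀ y ∈ Icc (0:ℝ) h, HasDerivAt v₁ (p₁ y / a₀ y) y)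
    (hp₁ : ∀ y ∈ Icc (0:ℝ) h, HasDerivAt p₁ (-(lam₀ * ρ₀ y * v₁ y)) y)
    (hv₂ : ∀ y ∈ Icc (0:ℝ) h, HasDerivAt v₂ (p₂ y / a₀ y) y)
    (hp₂ : ∀ y ∈ Icc (0:ℝ) h, HasDerivAt p₂ (-(lam₀ * ρ₀ y * v₂ y)) y)
    (hv₁0 : v₁ 0 = 1) (hp₁0 : p₁ 0 = 0) (hv₂0 : v₂ 0 = 0) (hp₂0 : p₂ 0 = 1) :
    Tendsto
      (fun ε : ℝ =>
        vε₁ ε h * wε₁ ε 1 + ε ^ 2 * pε₁ ε h * wε₂ ε 1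
          + (1 / ε ^ 2) * vε₂ ε h * qε₁ ε 1 + pε₂ ε h * qε₂ ε 1)
      (nhdsWithin 0 (Ioo 0 1))
      (nhds (v₁ h + p₂ h - lam₀ * v₂ h * ∫ y in h..(1:ℝ), ρ₁ y)) :=
  transfer_trace_convergence_general h hh0 hh1 a₀ ρ₀ a₁ ρ₁ ha₀c ha₀p hρ₀c ha₁c ha₁p hρ₁c lam₀ lam
    hlam vε₁ pε₁ vε₂ pε₂ hvε₁ hpε₁ hvε₂ hpε₂ hicε wε₁ qε₁ wε₂ qε₂ hwε₁ hqε₁ hwε₂ hqε₂ hicw v₁ p₁ v₂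
    p₂ hv₁ hp₁ hv₂ hp₂ hv₁0 hp₁0 hv₂0 hp₂0
end

section
/- Let λ_ε ∈ ℝ for ε ∈ (0,1) with λ_ε → λ₀ as ε → 0, and for each ε let (w₁^ε,q₁^ε) be the first member of the stiff fundamental system at (λ_ε,ε). Then ε^{−2}·q₁^ε(1) → −λ₀·∫_h^1 ρ₁(y) dy as ε → 0. -/
open Set Filter Topology

/-!
Integrating `q₁' = -ε²λρ₁w₁` from `q₁(h) = 0` gives `ε⁻² q₁(1) = -λ ∫ ρ₁ w₁`, so it suffices
that `w₁ → 1` uniformly on `[h, 1]`. The deviation `(w₁ - 1, q₁)` from the `ε = 0` solution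
`(1, 0)` vanishes at `h` and solves a linear system with forcing term `(0, -ε²λρ₁)` of size
`O(ε²)`, so Grönwall's inequality gives `|w₁ - 1| = O(ε²)`, whence
`ε⁻² q₁(1) + λ ∫ ρ₁ = O(ε²)`.
-/

theorem gronwallBound_const_mul (c δ K ε x : ℝ) :
    gronwallBound (c * δ) K (c * ε) x = c * gronwallBound δ K ε x := by
  unfold gronwallBound
  split_ifs <;> ring

section FirstStiffSolution

variable {a b μ ε l m M K : ℝ} {A ρ w q : ℝ → ℝ}

theorem abs_sub_one_le_mul_gronwallBound (hab : a ≤ b) (hm : 0 < m)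
    (hA : ∀ y ∈ Icc a b, m ≤ A y) (hρ : ∀ y ∈ Icc a b, |ρ y| ≤ M)
    (hmK : 1 / m ≤ K) (hμK : |μ| * M ≤ K)
    (hw : ∀ y ∈ Icc a b, HasDerivAt w (q y / A y) y)
    (hq : ∀ y ∈ Icc a b, HasDerivAt q (-(μ * ρ y * w y)) y)
    (hw0 : w a = 1) (hq0 : q a = 0) :
    ∀ y ∈ Icc a b, |w y - 1| ≤ |μ| * gronwallBound 0 K M (b - a) := by
  set u : ℝ → ℝ × ℝ := fun y => (w y - 1, q y)
  have hu : ∀ y ∈ Icc a b, HasDerivAt u (q y / A y, -(μ * ρ y * w y)) y := fun y hy =>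
    ((hw y hy).sub_const 1).prodMk (hq y hy)
  have hw_le (y : ℝ) : |w y - 1| ≤ ‖u y‖ := le_max_left _ _
  have hq_le (y : ℝ) : |q y| ≤ ‖u y‖ := le_max_right _ _
  have hK : 0 ≤ K := (one_div_pos.2 hm).le.trans hmK
  have hM : 0 ≤ M := (abs_nonneg _).trans (hρ a ⟨le_rfl, hab⟩)
  have hu' : ∀ y ∈ Ico a b,
      ‖((q y / A y, -(μ * ρ y * w y)) : ℝ × ℝ)‖ ≤ K * ‖u y‖ + |μ| * M := by
    intro y hy
    have hy' := Ico_subset_Icc_self hy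
    have hAy : 0 < A y := hm.trans_le (hA y hy')
    refine max_le ?_ ?_
    · calc ‖q y / A y‖ = |q y| / A y := by rw [Real.norm_eq_abs, abs_div, abs_of_pos hAy]
        _ ≤ 1 / m * |q y| := by
          rw [div_eq_inv_mul, one_div]
          gcongr
          exact hA y hy'
        _ ≤ K * ‖u y‖ + |μ| * M := by nlinarith [hq_le y, abs_nonneg (q y), abs_nonneg μ]
    · calc ‖-(μ * ρ y * w y)‖ = |μ| * |ρ y| * |(w y - 1) + 1| := by
            rw [norm_neg, Real.norm_eq_abs, abs_mul, abs_mul, sub_add_cancel]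
        _ ≤ |μ| * M * (‖u y‖ + 1) := by
          gcongr
          · exact hρ y hy'
          · exact (abs_add_le _ _).trans (by rw [abs_one]; linarith [hw_le y])
        _ ≤ K * ‖u y‖ + |μ| * M := by nlinarith [norm_nonneg (u y)]
  intro y hy
  calc |w y - 1| ≤ ‖u y‖ := hw_le y
    _ ≤ gronwallBound 0 K (|μ| * M) (y - a) :=
      norm_le_gronwallBound_of_norm_deriv_right_le
        (fun x hx => (hu x hx).continuousAt.continuousWithinAt)
        (fun x hx => (hu x (Ico_subset_Icc_self hx)).hasDerivWithinAt)
        (by simp [u, hw0, hq0]) hu' y hy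
    _ ≤ gronwallBound 0 K (|μ| * M) (b - a) :=
      gronwallBound_mono le_rfl (by positivity) hK (by linarith [hy.2])
    _ = |μ| * gronwallBound 0 K M (b - a) := by rw [← gronwallBound_const_mul, mul_zero]

theorem coderivative_eq_neg_mul_integral (hab : a ≤ b) (hρ : ContinuousOn ρ (Icc a b))
    (hw : ContinuousOn w (Icc a b)) (hq : ∀ y ∈ Icc a b, HasDerivAt q (-(μ * ρ y * w y)) y)
    (hq0 : q a = 0) :
    q b = -μ * ∫ y in a..b, ρ y * w y := by
  have hint : IntervalIntegrable (fun y => -(μ * ρ y * w y)) MeasureTheory.volume a b :=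
    ((continuousOn_const.mul hρ).mul hw).neg.intervalIntegrable_of_Icc hab
  have hFTC := intervalIntegral.integral_eq_sub_of_hasDerivAt
    (fun y hy => hq y (by rwa [uIcc_of_le hab] at hy)) hint
  rw [hq0, sub_zero] at hFTC
  rw [← hFTC, ← intervalIntegral.integral_const_mul]
  congr 1 with y
  ring

theorem abs_coderivative_add_mul_integral_le (hab : a ≤ b) (hm : 0 < m)
    (hA : ∀ y ∈ Icc a b, m ≤ A y) (hρc : ContinuousOn ρ (Icc a b))
    (hρ : ∀ y ∈ Icc a b, |ρ y| ≤ M) (hmK : 1 / m ≤ K) (hμK : |μ| * M ≤ K)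
    (hw : ∀ y ∈ Icc a b, HasDerivAt w (q y / A y) y)
    (hq : ∀ y ∈ Icc a b, HasDerivAt q (-(μ * ρ y * w y)) y)
    (hw0 : w a = 1) (hq0 : q a = 0) :
    |q b + μ * ∫ y in a..b, ρ y| ≤ μ ^ 2 * (M * gronwallBound 0 K M (b - a) * (b - a)) := by
  have hwc : ContinuousOn w (Icc a b) := fun y hy => (hw y hy).continuousAt.continuousWithinAt
  have hdev := abs_sub_one_le_mul_gronwallBound hab hm hA hρ hmK hμK hw hq hw0 hq0
  have hsplit : q b + μ * ∫ y in a..b, ρ y = -μ * ∫ y in a..b, ρ y * (w y - 1) := by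
    simp_rw [mul_sub, mul_one]
    rw [coderivative_eq_neg_mul_integral hab hρc hwc hq hq0,
      intervalIntegral.integral_sub (f := fun y => ρ y * w y)
        ((hρc.mul hwc).intervalIntegrable_of_Icc hab) (hρc.intervalIntegrable_of_Icc hab)]
    ring
  have hbound : ‖∫ y in a..b, ρ y * (w y - 1)‖
      ≤ M * (|μ| * gronwallBound 0 K M (b - a)) * |b - a| := by
    refine intervalIntegral.norm_integral_le_of_norm_le_const fun y hy => ?_
    rw [uIoc_of_le hab] at hy
    rw [Real.norm_eq_abs, abs_mul]
    exact mul_le_mul (hρ y (Ioc_subset_Icc_self hy)) (hdev y (Ioc_subset_Icc_self hy))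
      (abs_nonneg _) ((abs_nonneg _).trans (hρ a ⟨le_rfl, hab⟩))
  rw [Real.norm_eq_abs, abs_of_nonneg (sub_nonneg.2 hab)] at hbound
  rw [hsplit, abs_mul, abs_neg]
  calc |μ| * |∫ y in a..b, ρ y * (w y - 1)|
      ≤ |μ| * (M * (|μ| * gronwallBound 0 K M (b - a)) * (b - a)) := by gcongr
    _ = μ ^ 2 * (M * gronwallBound 0 K M (b - a) * (b - a)) := by
      rw [← sq_abs μ]; ring

theorem abs_inv_sq_mul_coderivative_add_mul_integral_le (hε : ε ≠ 0) (hab : a ≤ b)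
    (hm : 0 < m) (hA : ∀ y ∈ Icc a b, m ≤ A y) (hρc : ContinuousOn ρ (Icc a b))
    (hρ : ∀ y ∈ Icc a b, |ρ y| ≤ M) (hmK : 1 / m ≤ K) (hμK : |ε ^ 2 * l| * M ≤ K)
    (hw : ∀ y ∈ Icc a b, HasDerivAt w (q y / A y) y)
    (hq : ∀ y ∈ Icc a b, HasDerivAt q (-(ε ^ 2 * l * ρ y * w y)) y)
    (hw0 : w a = 1) (hq0 : q a = 0) :
    |1 / ε ^ 2 * q b + l * ∫ y in a..b, ρ y|
      ≤ ε ^ 2 * (l ^ 2 * (M * gronwallBound 0 K M (b - a) * (b - a))) := by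
  have hε2 : 0 < ε ^ 2 := by positivity
  have hrescale : 1 / ε ^ 2 * q b + l * ∫ y in a..b, ρ y
      = (q b + ε ^ 2 * l * ∫ y in a..b, ρ y) / ε ^ 2 := by
    field_simp
  rw [hrescale, abs_div, abs_of_pos hε2]
  calc |q b + ε ^ 2 * l * ∫ y in a..b, ρ y| / ε ^ 2
      ≤ (ε ^ 2 * l) ^ 2 * (M * gronwallBound 0 K M (b - a) * (b - a)) / ε ^ 2 := by
        gcongr
        exact abs_coderivative_add_mul_integral_le hab hm hA hρc hρ hmK hμK hw hq hw0 hq0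
    _ = ε ^ 2 * (l ^ 2 * (M * gronwallBound 0 K M (b - a) * (b - a))) := by field_simp

end FirstStiffSolution

theorem stiff_coderivative_limit_general
    (h : ℝ) (hh1 : h < 1)
    (a₁ ρ₁ : ℝ → ℝ)
    (ha₁c : ContinuousOn a₁ (Icc h 1)) (ha₁p : ∀ y ∈ Icc h (1:ℝ), 0 < a₁ y)
    (hρ₁c : ContinuousOn ρ₁ (Icc h 1))
    (lam₀ : ℝ) (lam : ℝ → ℝ)
    (hlam : Tendsto lam (nhdsWithin 0 (Ioo 0 1)) (nhds lam₀))
    (wε₁ qε₁ wε₂ qε₂ : ℝ → ℝ → ℝ)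
    (hwε₁ : ∀ ε ∈ Ioo (0:ℝ) 1, ∀ y ∈ Icc h (1:ℝ),
      HasDerivAt (wε₁ ε) (qε₁ ε y / a₁ y) y)
    (hqε₁ : ∀ ε ∈ Ioo (0:ℝ) 1, ∀ y ∈ Icc h (1:ℝ),
      HasDerivAt (qε₁ ε) (-(ε ^ 2 * lam ε * ρ₁ y * wε₁ ε y)) y)
    (hicw : ∀ ε ∈ Ioo (0:ℝ) 1,
      wε₁ ε h = 1 ∧ qε₁ ε h = 0 ∧ wε₂ ε h = 0 ∧ qε₂ ε h = 1) :
    Tendsto (fun ε : ℝ => (1 / ε ^ 2) * qε₁ ε 1)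
      (nhdsWithin 0 (Ioo 0 1))
      (nhds (-lam₀ * ∫ y in h..(1:ℝ), ρ₁ y)) := by
  obtain ⟨y₀, hy₀, ha₁min⟩ :=
    isCompact_Icc.exists_isMinOn ⟨h, left_mem_Icc.2 hh1.le⟩ ha₁c
  obtain ⟨M, hM⟩ := isCompact_Icc.exists_bound_of_continuousOn hρ₁c
  have hM0 : 0 ≤ M := (norm_nonneg _).trans (hM h (left_mem_Icc.2 hh1.le))
  -- a Lipschitz constant of the system whenever `|λ_ε| ≤ |λ₀| + 1`
  set K := max (1 / a₁ y₀) ((|lam₀| + 1) * M)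
  set D := M * gronwallBound 0 K M (1 - h) * (1 - h)
  have hdist : ∀ᶠ ε in 𝓝[Ioo 0 1] 0,
      dist (-lam ε * ∫ y in h..1, ρ₁ y) (1 / ε ^ 2 * qε₁ ε 1) ≤ ε ^ 2 * (lam ε ^ 2 * D) := by
    filter_upwards [self_mem_nhdsWithin,
      hlam.abs.eventually (ge_mem_nhds (lt_add_one |lam₀|))] with ε hε hlε
    have hε21 : ε ^ 2 ≤ 1 := pow_le_one₀ hε.1.le hε.2.le
    have hμK : |ε ^ 2 * lam ε| * M ≤ K := by
      refine le_max_of_le_right (mul_le_mul_of_nonneg_right ?_ hM0)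
      rw [abs_mul, abs_of_nonneg (sq_nonneg ε)]
      nlinarith [mul_le_mul_of_nonneg_right hε21 (abs_nonneg (lam ε))]
    rw [dist_comm, Real.dist_eq, neg_mul, sub_neg_eq_add]
    exact abs_inv_sq_mul_coderivative_add_mul_integral_le hε.1.ne' hh1.le (ha₁p y₀ hy₀)
      ha₁min hρ₁c hM (le_max_left _ _) hμK (hwε₁ ε hε) (hqε₁ ε hε)
      (hicw ε hε).1 (hicw ε hε).2.1
  have hsq : Tendsto (fun ε : ℝ => ε ^ 2) (𝓝[Ioo 0 1] 0) (𝓝 0) :=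
    tendsto_nhdsWithin_of_tendsto_nhds ((continuous_pow 2).tendsto' 0 0 (zero_pow two_ne_zero))
  refine (hlam.neg.mul_const _).congr_dist
    (squeeze_zero' (Eventually.of_forall fun _ => dist_nonneg) hdist ?_)
  simpa using hsq.mul ((hlam.pow 2).mul_const D)

/-- The rescaled co-derivative of the first stiff fundamental solution
satisfies `ε⁻² q₁^ε(1) → −λ₀ ∫_h^1 ρ₁` as `ε → 0`. -/
theorem stiff_coderivative_limit
    (h : ℝ) (hh0 : 0 < h) (hh1 : h < 1)
    (a₁ ρ₁ : ℝ → ℝ)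
    (ha₁c : ContinuousOn a₁ (Icc h 1)) (ha₁p : ∀ y ∈ Icc h (1:ℝ), 0 < a₁ y)
    (hρ₁c : ContinuousOn ρ₁ (Icc h 1)) (hρ₁p : ∀ y ∈ Icc h (1:ℝ), 0 < ρ₁ y)
    (lam₀ : ℝ) (lam : ℝ → ℝ)
    (hlam : Tendsto lam (nhdsWithin 0 (Ioo 0 1)) (nhds lam₀))
    (wε₁ qε₁ wε₂ qε₂ : ℝ → ℝ → ℝ)
    (hwε₁ : ∀ ε ∈ Ioo (0:ℝ) 1, ∀ y ∈ Icc h (1:ℝ),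
      HasDerivAt (wε₁ ε) (qε₁ ε y / a₁ y) y)
    (hqε₁ : ∀ ε ∈ Ioo (0:ℝ) 1, ∀ y ∈ Icc h (1:ℝ),
      HasDerivAt (qε₁ ε) (-(ε ^ 2 * lam ε * ρ₁ y * wε₁ ε y)) y)
    (hwε₂ : ∀ ε ∈ Ioo (0:ℝ) 1, ∀ y ∈ Icc h (1:ℝ),
      HasDerivAt (wε₂ ε) (qε₂ ε y / a₁ y) y)
    (hqε₂ : ∀ ε ∈ Ioo (0:ℝ) 1, ∀ y ∈ Icc h (1:ℝ),
      HasDerivAt (qε₂ ε) (-(ε ^ 2 * lam ε * ρ₁ y * wε₂ ε y)) y)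
    (hicw : ∀ ε ∈ Ioo (0:ℝ) 1,
      wε₁ ε h = 1 ∧ qε₁ ε h = 0 ∧ wε₂ ε h = 0 ∧ qε₂ ε h = 1) :
    Tendsto (fun ε : ℝ => (1 / ε ^ 2) * qε₁ ε 1)
      (nhdsWithin 0 (Ioo 0 1))
      (nhds (-lam₀ * ∫ y in h..(1:ℝ), ρ₁ y)) :=
  stiff_coderivative_limit_general h hh1 a₁ ρ₁ ha₁c ha₁p hρ₁c lam₀ lam hlam wε₁ qε₁ wε₂ qε₂ hwε₁
    hqε₁ hicw
end

section
/- There exists a constant C > 0, depending only on h, a₀, a₁, ρ₀, ρ₁, such that for every θ ∈ ℝ and every continuously differentiable u : [0,1] → ℂ with u(1) = e^{iθ}·u(0), there exists a continuous function v : [0,1] → ℂ which is continuously differentiable on [0,h], constant on [h,1], and satisfies v(h) = e^{iθ}·v(0), such that ∫_0^h a₀·|u′ − v′|² + ∫_h^1 a₁·|u′|² + ∫_0^1 ρ·|u − v|² ≤ C²·∫_h^1 a₁·|u′|². -/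
/-!
Bounding the weights above on each interval and `a₁` below, the stiff energy
`S = ∫_h^1 a₁ ‖u'‖²` controls `‖u y - u 1‖²` on `[h,1]` (Cauchy–Schwarz), in particular the
mismatch `A = u h - u 1`. Take `v = u 1` on `[h,1]` and `v = u - e` on `[0,h]`, where the
corrector `e` has `e 0 = 0`, `e h = A` and `e' h = u' h`; then `v` is quasiperiodic because `u`
is, and differentiable at `h` with `v' h = 0`. The slope `B = u' h` is not controlled by `S`, so
`e` carries it in a boundary layer `δ (exp ((y - h) / δ) - exp (-h / δ))`, whose energy is at
most `‖B‖² δ`; choosing `δ ≤ h` with `‖B‖² δ ≤ S` is possible since `S > 0` whenever `B ≠ 0`.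
-/

open Set MeasureTheory Real

theorem IsCompact.exists_nonneg_forall_le {α : Type*} [TopologicalSpace α] {s : Set α}
    {f : α → ℝ} (hs : IsCompact s) (hf : ContinuousOn f s) : ∃ M, 0 ≤ M ∧ ∀ x ∈ s, f x ≤ M := by
  obtain ⟨C, hC⟩ := hs.exists_bound_of_continuousOn hf
  exact ⟨max C 0, le_max_right _ _,
    fun x hx => (le_abs_self _).trans ((hC x hx).trans (le_max_left _ _))⟩

theorem IsCompact.exists_pos_forall_le {α : Type*} [TopologicalSpace α] {s : Set α}
    {f : α → ℝ} (hs : IsCompact s) (hne : s.Nonempty) (hf : ContinuousOn f s)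
    (hpos : ∀ x ∈ s, 0 < f x) : ∃ m, 0 < m ∧ ∀ x ∈ s, m ≤ f x := by
  obtain ⟨x, hx, hmin⟩ := hs.exists_isMinOn hne hf
  exact ⟨f x, hpos x hx, fun y hy => hmin hy⟩

theorem exists_pos_le_and_mul_le {c D S : ℝ} (hc : 0 < c) (hS : 0 ≤ S) (hDS : 0 < D → 0 < S) :
    ∃ δ, 0 < δ ∧ δ ≤ c ∧ D * δ ≤ S := by
  by_cases hD : 0 < D
  · refine ⟨min c (S / D), lt_min hc (div_pos (hDS hD) hD), min_le_left _ _, ?_⟩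
    calc D * min c (S / D) ≤ D * (S / D) := by gcongr; exact min_le_right _ _
      _ = S := mul_div_cancel₀ S hD.ne'
  · exact ⟨c, hc, le_rfl, by nlinarith⟩

theorem sq_integral_le_mul_integral_sq {g : ℝ → ℝ} {a b : ℝ} (hab : a < b)
    (hg : ContinuousOn g (Icc a b)) :
    (∫ x in a..b, g x) ^ 2 ≤ (b - a) * ∫ x in a..b, g x ^ 2 := by
  have hL : 0 < b - a := sub_pos.2 hab
  set J := ∫ x in a..b, g x
  have hgi := hg.intervalIntegrable_of_Icc (μ := volume) hab.le
  have hg2i : IntervalIntegrable (fun x => g x ^ 2) volume a b :=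
    (hg.pow 2).intervalIntegrable_of_Icc hab.le
  -- `J / (b - a)` is the mean of `g`, and the variance is nonnegative
  have hvar : ∫ x in a..b, (g x - J / (b - a)) ^ 2 = (∫ x in a..b, g x ^ 2) - J ^ 2 / (b - a) := by
    have hexp : ∀ x, (g x - J / (b - a)) ^ 2
        = g x ^ 2 - 2 * (J / (b - a)) * g x + (J / (b - a)) ^ 2 := fun x => by ring
    simp_rw [hexp]
    rw [intervalIntegral.integral_add (hg2i.sub (hgi.const_mul _)) intervalIntegrable_const,
      intervalIntegral.integral_sub hg2i (hgi.const_mul _), intervalIntegral.integral_const_mul,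
      intervalIntegral.integral_const, smul_eq_mul]
    field_simp
    ring
  have h0 : 0 ≤ ∫ x in a..b, (g x - J / (b - a)) ^ 2 :=
    intervalIntegral.integral_nonneg hab.le fun x _ => sq_nonneg _
  rw [hvar, sub_nonneg, div_le_iff₀ hL] at h0
  linarith

theorem integral_mul_le_mul_integral {f g : ℝ → ℝ} {a b M : ℝ} (hab : a ≤ b)
    (hf : ContinuousOn f (Icc a b)) (hg : ContinuousOn g (Icc a b))
    (hfM : ∀ x ∈ Icc a b, f x ≤ M) (hg0 : ∀ x ∈ Icc a b, 0 ≤ g x) :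
    ∫ x in a..b, f x * g x ≤ M * ∫ x in a..b, g x := by
  rw [← intervalIntegral.integral_const_mul]
  exact intervalIntegral.integral_mono_on hab ((hf.mul hg).intervalIntegrable_of_Icc hab)
    ((hg.const_smul M).intervalIntegrable_of_Icc hab)
    fun x hx => mul_le_mul_of_nonneg_right (hfM x hx) (hg0 x hx)

theorem integral_mul_le_of_le {f g : ℝ → ℝ} {a b M N : ℝ} (hab : a ≤ b)
    (hf : ContinuousOn f (Icc a b)) (hg : ContinuousOn g (Icc a b)) (hM : 0 ≤ M)
    (hfM : ∀ x ∈ Icc a b, f x ≤ M) (hg0 : ∀ x ∈ Icc a b, 0 ≤ g x)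
    (hgN : ∀ x ∈ Icc a b, g x ≤ N) :
    ∫ x in a..b, f x * g x ≤ M * (N * (b - a)) := by
  refine (integral_mul_le_mul_integral hab hf hg hfM hg0).trans (mul_le_mul_of_nonneg_left ?_ hM)
  calc ∫ x in a..b, g x ≤ ∫ _ in a..b, N :=
        intervalIntegral.integral_mono_on hab (hg.intervalIntegrable_of_Icc hab)
          intervalIntegrable_const hgN
    _ = N * (b - a) := by rw [intervalIntegral.integral_const, smul_eq_mul, mul_comm]

noncomputable section

variable {E : Type*} [NormedAddCommGroup E]

theorem exists_pos_le_and_norm_sq_mul_le_integral {u' : ℝ → E} {w : ℝ → ℝ} {a b c : ℝ}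
    (hab : a < b) (hc : 0 < c) (hw : ContinuousOn w (Icc a b)) (hw0 : ∀ x ∈ Icc a b, 0 < w x)
    (hu' : ContinuousOn u' (Icc a b)) :
    ∃ δ, 0 < δ ∧ δ ≤ c ∧ ‖u' a‖ ^ 2 * δ ≤ ∫ x in a..b, w x * ‖u' x‖ ^ 2 :=
  exists_pos_le_and_mul_le hc
    (intervalIntegral.integral_nonneg hab.le fun x hx => mul_nonneg (hw0 x hx).le (sq_nonneg _))
    fun hu'a => intervalIntegral.integral_pos hab (hw.mul (hu'.norm.pow 2))
      (fun x hx => mul_nonneg (hw0 x (Ioc_subset_Icc_self hx)).le (sq_nonneg _))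
      ⟨a, left_mem_Icc.2 hab.le, mul_pos (hw0 a (left_mem_Icc.2 hab.le)) hu'a⟩

variable [NormedSpace ℝ E]

theorem integral_eq_add_of_eqOn_Ioc {f f₀ f₁ : ℝ → E} {a b c : ℝ} (hab : a ≤ b) (hbc : b ≤ c)
    (h₀ : ContinuousOn f₀ (Icc a b)) (h₁ : ContinuousOn f₁ (Icc b c))
    (hf₀ : EqOn f f₀ (Ioc a b)) (hf₁ : EqOn f f₁ (Ioc b c)) :
    ∫ x in a..c, f x = (∫ x in a..b, f₀ x) + ∫ x in b..c, f₁ x := by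
  rw [← uIoc_of_le hab] at hf₀
  rw [← uIoc_of_le hbc] at hf₁
  rw [← intervalIntegral.integral_add_adjacent_intervals
      ((h₀.intervalIntegrable_of_Icc hab).congr hf₀.symm)
      ((h₁.intervalIntegrable_of_Icc hbc).congr hf₁.symm),
    intervalIntegral.integral_congr_ae (ae_of_all _ hf₀),
    intervalIntegral.integral_congr_ae (ae_of_all _ hf₁)]

theorem norm_sub_sq_le_mul_integral_norm_deriv_sq [CompleteSpace E] {u u' : ℝ → E} {a b y : ℝ}
    (hab : a < b) (hy : y ∈ Icc a b) (hu : ∀ x ∈ Icc a b, HasDerivAt u (u' x) x)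
    (hu' : ContinuousOn u' (Icc a b)) :
    ‖u y - u b‖ ^ 2 ≤ (b - a) * ∫ x in a..b, ‖u' x‖ ^ 2 := by
  have hyb : Icc y b ⊆ Icc a b := Icc_subset_Icc_left hy.1
  have hftc : ∫ x in y..b, u' x = u b - u y :=
    intervalIntegral.integral_eq_sub_of_hasDerivAt
      (fun x hx => hu x (hyb (by rwa [uIcc_of_le hy.2] at hx)))
      ((hu'.mono hyb).intervalIntegrable_of_Icc hy.2)
  calc ‖u y - u b‖ ^ 2 = ‖∫ x in y..b, u' x‖ ^ 2 := by rw [hftc, norm_sub_rev]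
    _ ≤ (∫ x in a..b, ‖u' x‖) ^ 2 := by
        gcongr
        exact (intervalIntegral.norm_integral_le_integral_norm hy.2).trans <|
          intervalIntegral.integral_mono_interval hy.1 hy.2
          le_rfl (ae_of_all _ fun _ => norm_nonneg _) (hu'.norm.intervalIntegrable_of_Icc hab.le)
    _ ≤ (b - a) * ∫ x in a..b, ‖u' x‖ ^ 2 := sq_integral_le_mul_integral_sq hab hu'.norm

theorem norm_sub_sq_le_div_mul_integral_weight [CompleteSpace E] {u u' : ℝ → E} {w : ℝ → ℝ}
    {a b y m : ℝ} (hab : a < b) (hy : y ∈ Icc a b) (hu : ∀ x ∈ Icc a b, HasDerivAt u (u' x) x)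
    (hu' : ContinuousOn u' (Icc a b)) (hw : ContinuousOn w (Icc a b)) (hm : 0 < m)
    (hwm : ∀ x ∈ Icc a b, m ≤ w x) :
    ‖u y - u b‖ ^ 2 ≤ (b - a) / m * ∫ x in a..b, w x * ‖u' x‖ ^ 2 := by
  have hweight : m * ∫ x in a..b, ‖u' x‖ ^ 2 ≤ ∫ x in a..b, w x * ‖u' x‖ ^ 2 := by
    rw [← intervalIntegral.integral_const_mul]
    exact intervalIntegral.integral_mono_on hab.le
      ((hu'.norm.pow 2).const_smul m |>.intervalIntegrable_of_Icc hab.le)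
      ((hw.mul (hu'.norm.pow 2)).intervalIntegrable_of_Icc hab.le)
      fun x hx => mul_le_mul_of_nonneg_right (hwm x hx) (sq_nonneg _)
  calc ‖u y - u b‖ ^ 2 ≤ (b - a) * ∫ x in a..b, ‖u' x‖ ^ 2 :=
        norm_sub_sq_le_mul_integral_norm_deriv_sq hab hy hu hu'
    _ ≤ (b - a) / m * ∫ x in a..b, w x * ‖u' x‖ ^ 2 := by
        rw [div_mul_eq_mul_div, le_div_iff₀ hm, mul_assoc]
        exact mul_le_mul_of_nonneg_left (by linarith) (sub_nonneg.2 hab.le)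

theorem hasDerivAt_comp_min {w w' : ℝ → E} {p y : ℝ} (hy : y ≤ p) (hw : HasDerivAt w (w' y) y)
    (hp : w' p = 0) : HasDerivAt (fun t => w (min t p)) (w' y) y := by
  rcases hy.lt_or_eq with hlt | rfl
  · refine hw.congr_of_eventuallyEq ?_
    filter_upwards [Iio_mem_nhds hlt] with t ht
    rw [min_eq_left (le_of_lt ht)]
  · rw [hp] at hw ⊢
    have hleft : HasDerivWithinAt (fun t => w (min t y)) 0 (Iic y) y :=
      hw.hasDerivWithinAt.congr (fun t ht => by rw [min_eq_left ht]) (by rw [min_self])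
    have hright : HasDerivWithinAt (fun t => w (min t y)) 0 (Ici y) y :=
      (hasDerivWithinAt_const y _ (w y)).congr (fun t ht => by rw [min_eq_right ht])
        (by rw [min_self])
    simpa [Iic_union_Ici] using hleft.union hright

def rampProfile (h y : ℝ) : ℝ := y / h * (2 - y / h)

def boundaryLayer (h δ y : ℝ) : ℝ := δ * (exp ((y - h) / δ) - exp (-h / δ))

section Profiles

variable {h δ y : ℝ}

theorem hasDerivAt_rampProfile (hh : h ≠ 0) (y : ℝ) :
    HasDerivAt (rampProfile h) (2 * (h - y) / h ^ 2) y := by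
  have hq := (hasDerivAt_id' y).div_const h
  exact (hq.mul (hq.const_sub 2)).congr_deriv (by field_simp; ring)

theorem rampProfile_self (hh : h ≠ 0) : rampProfile h h = 1 := by
  norm_num [rampProfile, hh]

theorem rampProfile_mem_Icc (hh : 0 < h) (hy : y ∈ Icc 0 h) : rampProfile h y ∈ Icc 0 1 := by
  have ht0 : 0 ≤ y / h := div_nonneg hy.1 hh.le
  have ht1 : y / h ≤ 1 := (div_le_one hh).2 hy.2
  constructor <;> unfold rampProfile <;> nlinarith

theorem deriv_rampProfile_mem_Icc (hh : 0 < h) (hy : y ∈ Icc 0 h) :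
    2 * (h - y) / h ^ 2 ∈ Icc 0 (2 / h) := by
  refine ⟨div_nonneg (by linarith [hy.2]) (by positivity), ?_⟩
  rw [div_le_div_iff₀ (by positivity) hh]
  nlinarith [hy.1]

theorem exp_sub_div_le_one (hδ : 0 ≤ δ) (hy : y ≤ h) : exp ((y - h) / δ) ≤ 1 :=
  exp_le_one_iff.2 (div_nonpos_of_nonpos_of_nonneg (sub_nonpos.2 hy) hδ)

theorem hasDerivAt_boundaryLayer (hδ : δ ≠ 0) (y : ℝ) :
    HasDerivAt (boundaryLayer h δ) (exp ((y - h) / δ)) y :=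
  ((((hasDerivAt_id' y).sub_const h).div_const δ).exp.sub_const
    (exp (-h / δ))).const_mul δ |>.congr_deriv (by field_simp)

theorem boundaryLayer_zero : boundaryLayer h δ 0 = 0 := by
  simp [boundaryLayer, neg_div]

theorem boundaryLayer_mem_Icc (hδ : 0 < δ) (hy : y ∈ Icc 0 h) :
    boundaryLayer h δ y ∈ Icc 0 δ := by
  have hlow : exp (-h / δ) ≤ exp ((y - h) / δ) := by
    gcongr; linarith [hy.1]
  have hup := exp_sub_div_le_one hδ.le hy.2
  constructor
  · exact mul_nonneg hδ.le (sub_nonneg.2 hlow)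
  · unfold boundaryLayer
    nlinarith [exp_pos (-h / δ)]

theorem integral_sq_deriv_boundaryLayer_le (hh : 0 ≤ h) (hδ : 0 < δ) :
    ∫ y in (0:ℝ)..h, exp ((y - h) / δ) ^ 2 ≤ δ := by
  have hcont : Continuous fun y => exp ((y - h) / δ) := by fun_prop
  calc ∫ y in (0:ℝ)..h, exp ((y - h) / δ) ^ 2 ≤ ∫ y in (0:ℝ)..h, exp ((y - h) / δ) := by
        refine intervalIntegral.integral_mono_on hh ((hcont.pow 2).intervalIntegrable _ _)
          (hcont.intervalIntegrable _ _) fun y hy => ?_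
        nlinarith [exp_pos ((y - h) / δ), exp_sub_div_le_one hδ.le hy.2]
    _ = boundaryLayer h δ h := by
        rw [intervalIntegral.integral_eq_sub_of_hasDerivAt
          (fun y _ => hasDerivAt_boundaryLayer hδ.ne' y) (hcont.intervalIntegrable _ _),
          boundaryLayer_zero, sub_zero]
    _ ≤ δ := (boundaryLayer_mem_Icc hδ ⟨hh, le_rfl⟩).2

end Profiles

def corrector (h δ : ℝ) (A B : E) (y : ℝ) : E :=
  rampProfile h y • (A - boundaryLayer h δ h • B) + boundaryLayer h δ y • B

def correctorDeriv (h δ : ℝ) (A B : E) (y : ℝ) : E :=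
  (2 * (h - y) / h ^ 2) • (A - boundaryLayer h δ h • B) + exp ((y - h) / δ) • B

section Corrector

variable {h δ : ℝ} {A B : E}

theorem hasDerivAt_corrector (hh : h ≠ 0) (hδ : δ ≠ 0) (y : ℝ) :
    HasDerivAt (corrector h δ A B) (correctorDeriv h δ A B y) y :=
  ((hasDerivAt_rampProfile hh y).smul_const _).add ((hasDerivAt_boundaryLayer hδ y).smul_const B)

theorem continuous_corrector : Continuous (corrector h δ A B) := by
  unfold corrector rampProfile boundaryLayer
  fun_prop

theorem continuous_correctorDeriv : Continuous (correctorDeriv h δ A B) := by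
  unfold correctorDeriv
  fun_prop

theorem corrector_zero : corrector h δ A B 0 = 0 := by
  simp [corrector, rampProfile, boundaryLayer_zero]

theorem corrector_self (hh : h ≠ 0) : corrector h δ A B h = A := by
  simp [corrector, rampProfile_self hh]

theorem correctorDeriv_self : correctorDeriv h δ A B h = B := by
  simp [correctorDeriv]

theorem norm_sub_boundaryLayer_smul_le (hh : 0 ≤ h) (hδ : 0 < δ) :
    ‖A - boundaryLayer h δ h • B‖ ≤ ‖A‖ + ‖B‖ * δ := by
  obtain ⟨hG0, hGδ⟩ := boundaryLayer_mem_Icc (y := h) hδ ⟨hh, le_rfl⟩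
  calc ‖A - boundaryLayer h δ h • B‖ ≤ ‖A‖ + boundaryLayer h δ h * ‖B‖ := by
        simpa [norm_smul, abs_of_nonneg hG0] using norm_sub_le A (boundaryLayer h δ h • B)
    _ ≤ ‖A‖ + ‖B‖ * δ := by nlinarith [norm_nonneg B]

theorem norm_corrector_sq_le (hh : 0 < h) (hδ : 0 < δ) {y : ℝ} (hy : y ∈ Icc 0 h) :
    ‖corrector h δ A B y‖ ^ 2 ≤ 8 * (‖A‖ ^ 2 + ‖B‖ ^ 2 * δ ^ 2) := by
  obtain ⟨hφ0, hφ1⟩ := rampProfile_mem_Icc hh hy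
  obtain ⟨hG0, hGδ⟩ := boundaryLayer_mem_Icc hδ hy
  have hα := norm_sub_boundaryLayer_smul_le (A := A) (B := B) hh.le hδ
  have hnorm : ‖corrector h δ A B y‖ ≤ ‖A‖ + 2 * (‖B‖ * δ) := by
    calc ‖corrector h δ A B y‖
        ≤ rampProfile h y * ‖A - boundaryLayer h δ h • B‖ + boundaryLayer h δ y * ‖B‖ := by
          refine (norm_add_le _ _).trans_eq ?_
          rw [norm_smul, norm_smul, Real.norm_of_nonneg hφ0, Real.norm_of_nonneg hG0]
      _ ≤ 1 * (‖A‖ + ‖B‖ * δ) + δ * ‖B‖ := by gcongr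
      _ = ‖A‖ + 2 * (‖B‖ * δ) := by ring
  calc ‖corrector h δ A B y‖ ^ 2 ≤ (‖A‖ + 2 * (‖B‖ * δ)) ^ 2 := by gcongr
    _ ≤ 2 * (‖A‖ ^ 2 + (2 * (‖B‖ * δ)) ^ 2) := add_sq_le
    _ ≤ 8 * (‖A‖ ^ 2 + ‖B‖ ^ 2 * δ ^ 2) := by nlinarith [sq_nonneg ‖A‖]

theorem norm_correctorDeriv_sq_le (hh : 0 < h) {y : ℝ} (hy : y ∈ Icc 0 h) :
    ‖correctorDeriv h δ A B y‖ ^ 2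
      ≤ 2 * (2 / h * ‖A - boundaryLayer h δ h • B‖) ^ 2 + 2 * ‖B‖ ^ 2 * exp ((y - h) / δ) ^ 2 := by
  obtain ⟨hd0, hd1⟩ := deriv_rampProfile_mem_Icc hh hy
  have hnorm : ‖correctorDeriv h δ A B y‖
      ≤ 2 / h * ‖A - boundaryLayer h δ h • B‖ + exp ((y - h) / δ) * ‖B‖ := by
    calc ‖correctorDeriv h δ A B y‖
        ≤ 2 * (h - y) / h ^ 2 * ‖A - boundaryLayer h δ h • B‖ + exp ((y - h) / δ) * ‖B‖ := by
          refine (norm_add_le _ _).trans_eq ?_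
          rw [norm_smul, norm_smul, Real.norm_of_nonneg hd0, Real.norm_of_nonneg (exp_pos _).le]
      _ ≤ 2 / h * ‖A - boundaryLayer h δ h • B‖ + exp ((y - h) / δ) * ‖B‖ := by gcongr
  calc ‖correctorDeriv h δ A B y‖ ^ 2
      ≤ (2 / h * ‖A - boundaryLayer h δ h • B‖ + exp ((y - h) / δ) * ‖B‖) ^ 2 := by gcongr
    _ ≤ _ := add_sq_le.trans_eq (by ring)

theorem integral_norm_correctorDeriv_sq_le (hh : 0 < h) (hδ : 0 < δ) :
    ∫ y in (0:ℝ)..h, ‖correctorDeriv h δ A B y‖ ^ 2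
      ≤ 16 / h * (‖A‖ ^ 2 + ‖B‖ ^ 2 * δ ^ 2) + 2 * (‖B‖ ^ 2 * δ) := by
  set α := ‖A - boundaryLayer h δ h • B‖
  have hα : α ^ 2 ≤ 2 * (‖A‖ ^ 2 + ‖B‖ ^ 2 * δ ^ 2) :=
    (pow_le_pow_left₀ (norm_nonneg _) (norm_sub_boundaryLayer_smul_le hh.le hδ) 2).trans
      (add_sq_le.trans_eq (by ring))
  have hlayer : Continuous fun y => 2 * ‖B‖ ^ 2 * exp ((y - h) / δ) ^ 2 := by fun_prop
  calc ∫ y in (0:ℝ)..h, ‖correctorDeriv h δ A B y‖ ^ 2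
      ≤ ∫ y in (0:ℝ)..h, (2 * (2 / h * α) ^ 2 + 2 * ‖B‖ ^ 2 * exp ((y - h) / δ) ^ 2) :=
        intervalIntegral.integral_mono_on hh.le
          ((continuous_correctorDeriv.norm.pow 2).intervalIntegrable _ _)
          ((continuous_const.add hlayer).intervalIntegrable _ _)
          fun y hy => norm_correctorDeriv_sq_le hh hy
    _ = h * (2 * (2 / h * α) ^ 2) + 2 * ‖B‖ ^ 2 * ∫ y in (0:ℝ)..h, exp ((y - h) / δ) ^ 2 := by
        rw [intervalIntegral.integral_add intervalIntegrable_const (hlayer.intervalIntegrable _ _),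
          intervalIntegral.integral_const_mul (2 * ‖B‖ ^ 2), intervalIntegral.integral_const,
          smul_eq_mul, sub_zero]
    _ ≤ 8 / h * (2 * (‖A‖ ^ 2 + ‖B‖ ^ 2 * δ ^ 2)) + 2 * ‖B‖ ^ 2 * δ := by
        rw [show h * (2 * (2 / h * α) ^ 2) = 8 / h * α ^ 2 by field_simp; ring]
        gcongr
        exact integral_sq_deriv_boundaryLayer_le hh.le hδ
    _ = 16 / h * (‖A‖ ^ 2 + ‖B‖ ^ 2 * δ ^ 2) + 2 * (‖B‖ ^ 2 * δ) := by ring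

end Corrector

def quasiperiodicApprox (h δ : ℝ) (u u' : ℝ → E) (y : ℝ) : E :=
  u (min y h) - corrector h δ (u h - u 1) (u' h) (min y h)

section Approx

variable {h δ y : ℝ} {u u' : ℝ → E}

theorem quasiperiodicApprox_of_le (hy : y ≤ h) :
    quasiperiodicApprox h δ u u' y = u y - corrector h δ (u h - u 1) (u' h) y := by
  simp [quasiperiodicApprox, min_eq_left hy]

theorem quasiperiodicApprox_zero (hh : 0 ≤ h) : quasiperiodicApprox h δ u u' 0 = u 0 := by
  rw [quasiperiodicApprox_of_le hh, corrector_zero, sub_zero]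

theorem quasiperiodicApprox_of_ge (hh : h ≠ 0) (hy : h ≤ y) :
    quasiperiodicApprox h δ u u' y = u 1 := by
  simp [quasiperiodicApprox, min_eq_right hy, corrector_self hh]

theorem continuousOn_quasiperiodicApprox {a b : ℝ} (hh : h ∈ Icc a b)
    (hu : ContinuousOn u (Icc a b)) : ContinuousOn (quasiperiodicApprox h δ u u') (Icc a b) := by
  have hmin : MapsTo (fun y => min y h) (Icc a b) (Icc a b) :=
    fun y hy => ⟨le_min hy.1 hh.1, (min_le_right _ _).trans hh.2⟩
  exact (hu.comp (continuous_id.min continuous_const).continuousOn hmin).sub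
    (continuous_corrector.comp (continuous_id.min continuous_const)).continuousOn

theorem hasDerivAt_quasiperiodicApprox (hh : h ≠ 0) (hδ : δ ≠ 0) (hy : y ≤ h)
    (hu : HasDerivAt u (u' y) y) :
    HasDerivAt (quasiperiodicApprox h δ u u')
      (u' y - correctorDeriv h δ (u h - u 1) (u' h) y) y :=
  hasDerivAt_comp_min (w := fun t => u t - corrector h δ (u h - u 1) (u' h) t)
    (w' := fun t => u' t - correctorDeriv h δ (u h - u 1) (u' h) t) hy
    (hu.sub (hasDerivAt_corrector hh hδ y)) (by simp [correctorDeriv_self])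

theorem integral_mul_norm_sub_quasiperiodicApprox_sq_le {ρ ρ₀ ρ₁ : ℝ → ℝ} {N₀ N₁ X : ℝ}
    (hh0 : 0 < h) (hh1 : h < 1) (hδ : 0 < δ) (hu : ContinuousOn u (Icc 0 1))
    (hρ₀c : ContinuousOn ρ₀ (Icc 0 h)) (hρ₁c : ContinuousOn ρ₁ (Icc h 1))
    (hρ₀eq : ∀ y ∈ Icc 0 h, ρ y = ρ₀ y) (hρ₁eq : ∀ y ∈ Ioc h 1, ρ y = ρ₁ y)
    (hN₀ : 0 ≤ N₀) (hρ₀le : ∀ y ∈ Icc 0 h, ρ₀ y ≤ N₀)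
    (hN₁ : 0 ≤ N₁) (hρ₁le : ∀ y ∈ Icc h 1, ρ₁ y ≤ N₁)
    (hX : ∀ y ∈ Icc h 1, ‖u y - u 1‖ ^ 2 ≤ X) :
    ∫ y in (0:ℝ)..1, ρ y * ‖u y - quasiperiodicApprox h δ u u' y‖ ^ 2
      ≤ N₀ * (8 * (‖u h - u 1‖ ^ 2 + ‖u' h‖ ^ 2 * δ ^ 2) * h) + N₁ * (X * (1 - h)) := by
  have he : ContinuousOn (fun y => ‖corrector h δ (u h - u 1) (u' h) y‖ ^ 2) (Icc 0 h) :=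
    (continuous_corrector.norm.pow 2).continuousOn
  have hu₁ : ContinuousOn (fun y => ‖u y - u 1‖ ^ 2) (Icc h 1) :=
    ((hu.mono (Icc_subset_Icc_left hh0.le)).sub continuousOn_const).norm.pow 2
  rw [integral_eq_add_of_eqOn_Ioc hh0.le hh1.le (hρ₀c.mul he) (hρ₁c.mul hu₁)
    (fun y hy => by
      simp only [Pi.mul_apply, hρ₀eq y (Ioc_subset_Icc_self hy), quasiperiodicApprox_of_le hy.2,
        sub_sub_cancel])
    (fun y hy => by
      simp only [Pi.mul_apply, hρ₁eq y hy, quasiperiodicApprox_of_ge hh0.ne' hy.1.le])]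
  gcongr
  · exact (integral_mul_le_of_le hh0.le hρ₀c he hN₀ hρ₀le (fun _ _ => sq_nonneg _)
      fun y hy => norm_corrector_sq_le hh0 hδ hy).trans_eq (by rw [sub_zero])
  · exact integral_mul_le_of_le hh1.le hρ₁c hu₁ hN₁ hρ₁le (fun _ _ => sq_nonneg _) hX

theorem exists_energy_quasiperiodicApprox_le [CompleteSpace E] {a₀ ρ₀ a₁ ρ₁ ρ : ℝ → ℝ}
    {M₀ N₀ N₁ m : ℝ} (hh0 : 0 < h) (hh1 : h < 1)
    (ha₀c : ContinuousOn a₀ (Icc 0 h)) (hM₀ : 0 ≤ M₀) (ha₀le : ∀ y ∈ Icc 0 h, a₀ y ≤ M₀)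
    (ha₁c : ContinuousOn a₁ (Icc h 1)) (hm : 0 < m) (ha₁ge : ∀ y ∈ Icc h 1, m ≤ a₁ y)
    (hρ₀c : ContinuousOn ρ₀ (Icc 0 h)) (hρ₁c : ContinuousOn ρ₁ (Icc h 1))
    (hρ₀eq : ∀ y ∈ Icc 0 h, ρ y = ρ₀ y) (hρ₁eq : ∀ y ∈ Ioc h 1, ρ y = ρ₁ y)
    (hN₀ : 0 ≤ N₀) (hρ₀le : ∀ y ∈ Icc 0 h, ρ₀ y ≤ N₀)
    (hN₁ : 0 ≤ N₁) (hρ₁le : ∀ y ∈ Icc h 1, ρ₁ y ≤ N₁)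
    (hu'c : ContinuousOn u' (Icc 0 1)) (hu : ∀ y ∈ Icc 0 1, HasDerivAt u (u' y) y) :
    ∃ δ > 0, (∫ y in (0:ℝ)..h, a₀ y * ‖correctorDeriv h δ (u h - u 1) (u' h) y‖ ^ 2)
        + (∫ y in h..(1:ℝ), a₁ y * ‖u' y‖ ^ 2)
        + (∫ y in (0:ℝ)..1, ρ y * ‖u y - quasiperiodicApprox h δ u u' y‖ ^ 2)
      ≤ (1 + M₀ * (16 / h * ((1 - h) / m + h) + 2) + N₀ * (8 * ((1 - h) / m + h) * h)
          + N₁ * ((1 - h) / m * (1 - h))) * ∫ y in h..(1:ℝ), a₁ y * ‖u' y‖ ^ 2 := by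
  have hsub : Icc h 1 ⊆ Icc (0:ℝ) 1 := Icc_subset_Icc_left hh0.le
  have ha₁p : ∀ y ∈ Icc h 1, 0 < a₁ y := fun y hy => hm.trans_le (ha₁ge y hy)
  set S := ∫ y in h..(1:ℝ), a₁ y * ‖u' y‖ ^ 2
  set K := (1 - h) / m
  have hS : 0 ≤ S := intervalIntegral.integral_nonneg hh1.le
    fun y hy => mul_nonneg (ha₁p y hy).le (sq_nonneg _)
  have hstiff : ∀ y ∈ Icc h 1, ‖u y - u 1‖ ^ 2 ≤ K * S := fun y hy =>
    norm_sub_sq_le_div_mul_integral_weight hh1 hy (fun x hx => hu x (hsub hx)) (hu'c.mono hsub)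
      ha₁c hm ha₁ge
  obtain ⟨δ, hδ, hδh, hBδ⟩ :=
    exists_pos_le_and_norm_sq_mul_le_integral hh1 hh0 ha₁c ha₁p (hu'c.mono hsub)
  have hE : ‖u h - u 1‖ ^ 2 + ‖u' h‖ ^ 2 * δ ^ 2 ≤ (K + h) * S := by
    nlinarith [hstiff h (left_mem_Icc.2 hh1.le)]
  have he' : ContinuousOn (fun y => ‖correctorDeriv h δ (u h - u 1) (u' h) y‖ ^ 2) (Icc 0 h) :=
    (continuous_correctorDeriv.norm.pow 2).continuousOn
  have hsoft := (integral_mul_le_mul_integral hh0.le ha₀c he' ha₀le fun _ _ => sq_nonneg _).trans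
    (mul_le_mul_of_nonneg_left (integral_norm_correctorDeriv_sq_le hh0 hδ) hM₀)
  have hρ := integral_mul_norm_sub_quasiperiodicApprox_sq_le (u' := u') hh0 hh1 hδ
    (fun y hy => (hu y hy).continuousAt.continuousWithinAt) hρ₀c hρ₁c hρ₀eq hρ₁eq
    hN₀ hρ₀le hN₁ hρ₁le hstiff
  refine ⟨δ, hδ, ?_⟩
  calc _ ≤ M₀ * (16 / h * ((K + h) * S) + 2 * S) + S
        + (N₀ * (8 * ((K + h) * S) * h) + N₁ * (K * S * (1 - h))) :=
        add_le_add (add_le_add (hsoft.trans (by gcongr)) le_rfl) (hρ.trans (by gcongr))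
    _ = _ := by ring

end Approx

end

theorem uniform_poincare_inequality_general
    (h : ℝ) (hh0 : 0 < h) (hh1 : h < 1)
    (a₀ ρ₀ a₁ ρ₁ ρ : ℝ → ℝ)
    (ha₀c : ContinuousOn a₀ (Icc 0 h))
    (hρ₀c : ContinuousOn ρ₀ (Icc 0 h))
    (ha₁c : ContinuousOn a₁ (Icc h 1)) (ha₁p : ∀ y ∈ Icc h (1:ℝ), 0 < a₁ y)
    (hρ₁c : ContinuousOn ρ₁ (Icc h 1))
    (hρ₀eq : ∀ y ∈ Icc (0:ℝ) h, ρ y = ρ₀ y)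
    (hρ₁eq : ∀ y ∈ Ioc h (1:ℝ), ρ y = ρ₁ y) :
    ∃ C > 0, ∀ θ : ℝ, ∀ u u' : ℝ → ℂ,
      ContinuousOn u' (Icc 0 1) →
      (∀ y ∈ Icc (0:ℝ) 1, HasDerivAt u (u' y) y) →
      u 1 = Complex.exp (θ * Complex.I) * u 0 →
      ∃ v v' : ℝ → ℂ,
        ContinuousOn v (Icc 0 1) ∧
        ContinuousOn v' (Icc 0 h) ∧
        (∀ y ∈ Icc (0:ℝ) h, HasDerivAt v (v' y) y) ∧
        (∀ y ∈ Icc h (1:ℝ), v y = v h) ∧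
        v h = Complex.exp (θ * Complex.I) * v 0 ∧
        (∫ y in (0:ℝ)..h, a₀ y * ‖u' y - v' y‖ ^ 2)
            + (∫ y in h..(1:ℝ), a₁ y * ‖u' y‖ ^ 2)
            + (∫ y in (0:ℝ)..1, ρ y * ‖u y - v y‖ ^ 2)
          ≤ C ^ 2 * ∫ y in h..(1:ℝ), a₁ y * ‖u' y‖ ^ 2 := by
  obtain ⟨M₀, hM₀, ha₀le⟩ := isCompact_Icc.exists_nonneg_forall_le ha₀c
  obtain ⟨N₀, hN₀, hρ₀le⟩ := isCompact_Icc.exists_nonneg_forall_le hρ₀c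
  obtain ⟨N₁, hN₁, hρ₁le⟩ := isCompact_Icc.exists_nonneg_forall_le hρ₁c
  obtain ⟨m, hm, ha₁ge⟩ := isCompact_Icc.exists_pos_forall_le (nonempty_Icc.2 hh1.le) ha₁c ha₁p
  have hK : 0 ≤ (1 - h) / m := div_nonneg (sub_nonneg.2 hh1.le) hm.le
  refine ⟨√(1 + M₀ * (16 / h * ((1 - h) / m + h) + 2) + N₀ * (8 * ((1 - h) / m + h) * h)
      + N₁ * ((1 - h) / m * (1 - h))), by positivity, fun θ u u' hu'c hu hper => ?_⟩
  obtain ⟨δ, hδ, henergy⟩ := exists_energy_quasiperiodicApprox_le hh0 hh1 ha₀c hM₀ ha₀le ha₁c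
    hm ha₁ge hρ₀c hρ₁c hρ₀eq hρ₁eq hN₀ hρ₀le hN₁ hρ₁le hu'c hu
  have hsub : Icc 0 h ⊆ Icc (0:ℝ) 1 := Icc_subset_Icc_right hh1.le
  refine ⟨quasiperiodicApprox h δ u u', fun y => u' y - correctorDeriv h δ (u h - u 1) (u' h) y,
    continuousOn_quasiperiodicApprox ⟨hh0.le, hh1.le⟩
      fun y hy => (hu y hy).continuousAt.continuousWithinAt,
    (hu'c.mono hsub).sub continuous_correctorDeriv.continuousOn,
    fun y hy => hasDerivAt_quasiperiodicApprox hh0.ne' hδ.ne' hy.2 (hu y (hsub hy)),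
    fun y hy => by
      rw [quasiperiodicApprox_of_ge hh0.ne' hy.1, quasiperiodicApprox_of_ge hh0.ne' le_rfl],
    by rw [quasiperiodicApprox_of_ge hh0.ne' le_rfl, quasiperiodicApprox_zero hh0.le, hper], ?_⟩
  rw [sq_sqrt (by positivity)]
  simpa only [sub_sub_cancel] using henergy

/-- `θ`-uniform Poincaré-type inequality: every `θ`-quasiperiodic
continuously differentiable function `u` on `[0,1]` can be approximated in the weighted
energy norm by a `θ`-quasiperiodic function `v` that is constant on the stiff interval
`[h,1]`, with error controlled by the stiff part of the energy of `u`, uniformly in `θ`. -/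
theorem uniform_poincare_inequality
    (h : ℝ) (hh0 : 0 < h) (hh1 : h < 1)
    (a₀ ρ₀ a₁ ρ₁ ρ : ℝ → ℝ)
    (ha₀c : ContinuousOn a₀ (Icc 0 h)) (ha₀p : ∀ y ∈ Icc (0:ℝ) h, 0 < a₀ y)
    (hρ₀c : ContinuousOn ρ₀ (Icc 0 h)) (hρ₀p : ∀ y ∈ Icc (0:ℝ) h, 0 < ρ₀ y)
    (ha₁c : ContinuousOn a₁ (Icc h 1)) (ha₁p : ∀ y ∈ Icc h (1:ℝ), 0 < a₁ y)
    (hρ₁c : ContinuousOn ρ₁ (Icc h 1)) (hρ₁p : ∀ y ∈ Icc h (1:ℝ), 0 < ρ₁ y)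
    (hρ₀eq : ∀ y ∈ Icc (0:ℝ) h, ρ y = ρ₀ y)
    (hρ₁eq : ∀ y ∈ Ioc h (1:ℝ), ρ y = ρ₁ y) :
    ∃ C > 0, ∀ θ : ℝ, ∀ u u' : ℝ → ℂ,
      ContinuousOn u' (Icc 0 1) →
      (∀ y ∈ Icc (0:ℝ) 1, HasDerivAt u (u' y) y) →
      u 1 = Complex.exp (θ * Complex.I) * u 0 →
      ∃ v v' : ℝ → ℂ,
        ContinuousOn v (Icc 0 1) ∧
        ContinuousOn v' (Icc 0 h) ∧
        (∀ y ∈ Icc (0:ℝ) h, HasDerivAt v (v' y) y) ∧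
        (∀ y ∈ Icc h (1:ℝ), v y = v h) ∧
        v h = Complex.exp (θ * Complex.I) * v 0 ∧
        (∫ y in (0:ℝ)..h, a₀ y * ‖u' y - v' y‖ ^ 2)
            + (∫ y in h..(1:ℝ), a₁ y * ‖u' y‖ ^ 2)
            + (∫ y in (0:ℝ)..1, ρ y * ‖u y - v y‖ ^ 2)
          ≤ C ^ 2 * ∫ y in h..(1:ℝ), a₁ y * ‖u' y‖ ^ 2 :=
  uniform_poincare_inequality_general h hh0 hh1 a₀ ρ₀ a₁ ρ₁ ρ ha₀c hρ₀c ha₁c ha₁p hρ₁c hρ₀eq hρ₁eq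
end
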